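/- arXiv:math-ph/9907015 — 8 statements merged into one kernel-verified Lean document; each statement's English description precedes it below -/
import Mathlib

section
/- Let n ≥ 1 and suppose D₁, D₂ : ℍ^{n×n} → ℝ≥0 are two functionals, each of which is multiplicative (Dᵢ(MN) = Dᵢ(M)·Dᵢ(N) for all quaternionic n×n matrices M, N) and satisfies the scaling condition Dᵢ(qI) = |q|ⁿ for every quaternion q. Then D₁ = D₂, i.e., D₁(M) = D₂(M) for every M ∈ ℍ^{n×n}. -/
open Matrix
open scoped NNReal

namespace StudyU

variable {n p : Type*} {K : Type*} [DivisionRing K]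
variable [DecidableEq n] [DecidableEq p]

/-- transvection matrix over a (possibly noncommutative) ring -/
def tvec (i j : n) (c : K) : Matrix n n K :=
  1 + Matrix.single i j c

@[simp]
theorem tvec_zero (i j : n) : tvec i j (0 : K) = 1 := by simp [tvec]

section
variable [Fintype n] (i j : n)

theorem tvec_mul_tvec_same (h : i ≠ j) (c d : K) :
    tvec i j c * tvec i j d = tvec i j (c + d) := by
  simp [tvec, Matrix.add_mul, Matrix.mul_add, h, h.symm, single_add,
    single_mul_single_of_ne, add_assoc]

@[simp]
theorem tvec_mul_apply_same (b : n) (c : K) (M : Matrix n n K) :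
    (tvec i j c * M) i b = M i b + c * M j b := by simp [tvec, Matrix.add_mul]

@[simp]
theorem mul_tvec_apply_same (a : n) (c : K) (M : Matrix n n K) :
    (M * tvec i j c) a j = M a j + M a i * c := by simp [tvec, Matrix.mul_add]

@[simp]
theorem tvec_mul_apply_of_ne (a b : n) (ha : a ≠ i) (c : K) (M : Matrix n n K) :
    (tvec i j c * M) a b = M a b := by simp [tvec, Matrix.add_mul, ha]

@[simp]
theorem mul_tvec_apply_of_ne (a b : n) (hb : b ≠ j) (c : K) (M : Matrix n n K) :
    (M * tvec i j c) a b = M a b := by simp [tvec, Matrix.mul_add, hb]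

end

variable (n K) in
/-- data of a transvection -/
structure TS where
  (i j : n)
  hij : i ≠ j
  c : K

namespace TS

/-- the matrix of a `TS` -/
def toMatrix (t : TS n K) : Matrix n n K :=
  tvec t.i t.j t.c

@[simp]
theorem toMatrix_mk (i j : n) (hij : i ≠ j) (c : K) :
    TS.toMatrix ⟨i, j, hij, c⟩ = tvec i j c :=
  rfl

/-- inverse transvection -/
protected def inv (t : TS n K) : TS n K where
  i := t.i
  j := t.j
  hij := t.hij
  c := -t.c

section

variable [Fintype n]

theorem inv_mul (t : TS n K) : t.inv.toMatrix * t.toMatrix = 1 := by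
  rcases t with ⟨_, _, t_hij⟩
  simp [toMatrix, TS.inv, tvec_mul_tvec_same, t_hij]

theorem mul_inv (t : TS n K) : t.toMatrix * t.inv.toMatrix = 1 := by
  rcases t with ⟨_, _, t_hij⟩
  simp [toMatrix, TS.inv, tvec_mul_tvec_same, t_hij]

theorem reverse_inv_prod_mul_prod (L : List (TS n K)) :
    (L.reverse.map (toMatrix ∘ TS.inv)).prod * (L.map toMatrix).prod = 1 := by
  induction' L with t L IH
  · simp
  · suffices
      (L.reverse.map (toMatrix ∘ TS.inv)).prod * (t.inv.toMatrix * t.toMatrix) *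
          (L.map toMatrix).prod = 1
      by simpa [Matrix.mul_assoc]
    simpa [inv_mul] using IH

theorem prod_mul_reverse_inv_prod (L : List (TS n K)) :
    (L.map toMatrix).prod * (L.reverse.map (toMatrix ∘ TS.inv)).prod = 1 := by
  induction' L with t L IH
  · simp
  · suffices
      t.toMatrix *
            ((L.map toMatrix).prod * (L.reverse.map (toMatrix ∘ TS.inv)).prod) *
          t.inv.toMatrix = 1
      by simpa [Matrix.mul_assoc]
    simp_rw [IH, Matrix.mul_one, t.mul_inv]

end

open Sum

variable (p) in
/-- extend a transvection on `n` to `n ⊕ p` -/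
def sumInl (t : TS n K) : TS (n ⊕ p) K where
  i := inl t.i
  j := inl t.j
  hij := by simp [t.hij]
  c := t.c

theorem toMatrix_sumInl (t : TS n K) :
    (t.sumInl p).toMatrix = fromBlocks t.toMatrix 0 0 1 := by
  cases t
  ext a b
  cases' a with a a <;> cases' b with b b
  · by_cases h : a = b <;> simp [TS.sumInl, toMatrix, tvec, h, single]
  · simp [TS.sumInl, toMatrix, tvec, single]
  · simp [TS.sumInl, toMatrix, tvec, single]
  · by_cases h : a = b <;> simp [TS.sumInl, toMatrix, tvec, h, single]

@[simp]
theorem sumInl_toMatrix_prod_mul [Fintype n] [Fintype p] (M : Matrix n n K)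
    (L : List (TS n K)) (N : Matrix p p K) :
    (L.map (toMatrix ∘ sumInl p)).prod * fromBlocks M 0 0 N =
      fromBlocks ((L.map toMatrix).prod * M) 0 0 N := by
  induction' L with t L IH
  · simp
  · simp [Matrix.mul_assoc, IH, toMatrix_sumInl, fromBlocks_multiply]

@[simp]
theorem mul_sumInl_toMatrix_prod [Fintype n] [Fintype p] (M : Matrix n n K)
    (L : List (TS n K)) (N : Matrix p p K) :
    fromBlocks M 0 0 N * (L.map (toMatrix ∘ sumInl p)).prod =
      fromBlocks (M * (L.map toMatrix).prod) 0 0 N := by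
  induction' L with t L IH generalizing M N
  · simp
  · simp [IH, toMatrix_sumInl, fromBlocks_multiply]

/-- reindex a transvection -/
def reindexEquiv (e : n ≃ p) (t : TS n K) : TS p K where
  i := e t.i
  j := e t.j
  hij := by simp [t.hij]
  c := t.c

variable [Fintype n] [Fintype p]

theorem toMatrix_reindexEquiv (e : n ≃ p) (t : TS n K) :
    (t.reindexEquiv e).toMatrix = reindexAlgEquiv ℕ K e t.toMatrix := by
  rcases t with ⟨t_i, t_j, _⟩
  ext a b
  simp only [reindexEquiv, toMatrix, tvec, toMatrix_mk,
    submatrix_apply, reindex_apply, Matrix.add_apply, reindexAlgEquiv_apply]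
  by_cases ha : e t_i = a <;> by_cases hb : e t_j = b <;> by_cases hab : a = b <;>
    simp [ha, hb, hab, ← e.apply_eq_iff_eq_symm_apply, single, one_apply]

theorem toMatrix_reindexEquiv_prod (e : n ≃ p) (L : List (TS n K)) :
    (L.map (toMatrix ∘ reindexEquiv e)).prod = reindexAlgEquiv ℕ K e (L.map toMatrix).prod := by
  induction' L with t L IH
  · simp
  · simp only [toMatrix_reindexEquiv, IH, Function.comp_apply, List.prod_cons,
      reindexAlgEquiv_apply, List.map]
    exact (reindexAlgEquiv_mul ℕ K _ _ _).symm

end TS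

end StudyU
namespace StudyU

namespace Pivot

variable {K : Type*} [DivisionRing K] {r : ℕ} (M : Matrix (Fin r ⊕ Unit) (Fin r ⊕ Unit) K)

open Sum TS

/-- column-killing transvections -/
def listTransvecCol : List (Matrix (Fin r ⊕ Unit) (Fin r ⊕ Unit) K) :=
  List.ofFn fun i : Fin r =>
    tvec (inl i) (inr Unit.unit) <| -M (inl i) (inr Unit.unit) / M (inr Unit.unit) (inr Unit.unit)

/-- row-killing transvections -/
def listTransvecRow : List (Matrix (Fin r ⊕ Unit) (Fin r ⊕ Unit) K) :=
  List.ofFn fun i : Fin r =>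
    tvec (inr Unit.unit) (inl i) <|
      -(M (inr Unit.unit) (inr Unit.unit))⁻¹ * M (inr Unit.unit) (inl i)

@[simp]
theorem length_listTransvecCol : (listTransvecCol M).length = r := by simp [listTransvecCol]

@[simp]
theorem length_listTransvecRow : (listTransvecRow M).length = r := by simp [listTransvecRow]

theorem listTransvecCol_mul_last_row_drop (i : Fin r ⊕ Unit) {k : ℕ} (hk : k ≤ r) :
    (((listTransvecCol M).drop k).prod * M) (inr Unit.unit) i = M (inr Unit.unit) i := by
  induction hk using Nat.decreasingInduction with
  | of_succ n hn IH =>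
    have hn' : n < (listTransvecCol M).length := by simpa [listTransvecCol] using hn
    rw [List.drop_eq_getElem_cons hn']
    simpa [listTransvecCol, Matrix.mul_assoc]
  | self =>
    simp only [length_listTransvecCol, le_refl, List.drop_eq_nil_of_le, List.prod_nil,
      Matrix.one_mul]

theorem listTransvecCol_mul_last_row (i : Fin r ⊕ Unit) :
    ((listTransvecCol M).prod * M) (inr Unit.unit) i = M (inr Unit.unit) i := by
  simpa using listTransvecCol_mul_last_row_drop M i zero_le

theorem listTransvecCol_mul_last_col (hM : M (inr Unit.unit) (inr Unit.unit) ≠ 0) (i : Fin r) :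
    ((listTransvecCol M).prod * M) (inl i) (inr Unit.unit) = 0 := by
  suffices H :
    ∀ k : ℕ,
      k ≤ r →
        (((listTransvecCol M).drop k).prod * M) (inl i) (inr Unit.unit) =
          if k ≤ i then 0 else M (inl i) (inr Unit.unit) by
    simpa only [List.drop, _root_.zero_le, ite_true] using H 0 zero_le
  intro k hk
  induction hk using Nat.decreasingInduction with
  | of_succ n hn IH =>
    have hn' : n < (listTransvecCol M).length := by simpa [listTransvecCol] using hn
    let n' : Fin r := ⟨n, hn⟩
    rw [List.drop_eq_getElem_cons hn']
    have A :
      (listTransvecCol M)[n] =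
        tvec (inl n') (inr Unit.unit)
          (-M (inl n') (inr Unit.unit) / M (inr Unit.unit) (inr Unit.unit)) := by
      simp [listTransvecCol, n']
    simp only [Matrix.mul_assoc, A, List.prod_cons]
    by_cases h : n' = i
    · have hni : n = i := by
        cases i
        simp only [n', Fin.mk_eq_mk] at h
        simp [h]
      simp only [h, tvec_mul_apply_same, IH, ← hni, add_le_iff_nonpos_right,
          listTransvecCol_mul_last_row_drop _ _ hn]
      simp only [Nat.le_zero, Nat.succ_ne_zero, if_false, neg_div]
      rw [neg_mul, div_mul_cancel₀ _ hM, add_neg_cancel, if_pos le_rfl]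
    · have hni : n ≠ i := by
        rintro rfl
        cases i
        simp [n'] at h
      simp only [ne_eq, inl.injEq, Ne.symm h, not_false_eq_true, tvec_mul_apply_of_ne]
      rw [IH]
      rcases le_or_gt (n + 1) i with (hi | hi)
      · simp only [hi, n.le_succ.trans hi, if_true]
      · rw [if_neg, if_neg]
        · simpa only [hni.symm, not_le, or_false] using Nat.lt_succ_iff_lt_or_eq.1 hi
        · simpa only [not_le] using hi
  | self =>
    simp only [length_listTransvecCol, le_refl, List.drop_eq_nil_of_le, List.prod_nil,
      Matrix.one_mul]
    rw [if_neg]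
    simpa only [not_le] using i.2

theorem mul_listTransvecRow_last_col_take (i : Fin r ⊕ Unit) {k : ℕ} (hk : k ≤ r) :
    (M * ((listTransvecRow M).take k).prod) i (inr Unit.unit) = M i (inr Unit.unit) := by
  induction' k with k IH
  · simp only [Matrix.mul_one, List.take_zero, List.prod_nil, List.take, Matrix.mul_one]
  · have hkr : k < r := hk
    let k' : Fin r := ⟨k, hkr⟩
    have :
      (listTransvecRow M)[k]? =
        ↑(tvec (inr Unit.unit) (inl k')
            (-(M (inr Unit.unit) (inr Unit.unit))⁻¹ * M (inr Unit.unit) (inl k'))) := by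
      simp only [listTransvecRow, List.ofFnNthVal, hkr, dif_pos, List.getElem?_ofFn, k']
    simp only [List.take_succ, ← Matrix.mul_assoc, this, List.prod_append, Matrix.mul_one,
      List.prod_cons, List.prod_nil, Option.toList_some]
    rw [mul_tvec_apply_of_ne, IH hkr.le]
    simp only [Ne, not_false_iff, reduceCtorEq]

theorem mul_listTransvecRow_last_col (i : Fin r ⊕ Unit) :
    (M * (listTransvecRow M).prod) i (inr Unit.unit) = M i (inr Unit.unit) := by
  have A : (listTransvecRow M).length = r := by simp [listTransvecRow]
  rw [← List.take_length (l := listTransvecRow M), A]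
  simpa using mul_listTransvecRow_last_col_take M i le_rfl

theorem mul_listTransvecRow_last_row (hM : M (inr Unit.unit) (inr Unit.unit) ≠ 0) (i : Fin r) :
    (M * (listTransvecRow M).prod) (inr Unit.unit) (inl i) = 0 := by
  suffices H :
    ∀ k : ℕ,
      k ≤ r →
        (M * ((listTransvecRow M).take k).prod) (inr Unit.unit) (inl i) =
          if k ≤ i then M (inr Unit.unit) (inl i) else 0 by
    have A : (listTransvecRow M).length = r := by simp [listTransvecRow]
    rw [← List.take_length (l := listTransvecRow M), A]
    have : ¬r ≤ i := by simp
    simpa only [if_neg this, ite_eq_right_iff] using H r le_rfl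
  intro k hk
  induction' k with n IH
  · simp only [if_true, Matrix.mul_one, List.take_zero, zero_le', List.prod_nil]
  · have hnr : n < r := hk
    let n' : Fin r := ⟨n, hnr⟩
    have A :
      (listTransvecRow M)[n]? =
        ↑(tvec (inr Unit.unit) (inl n')
        (-(M (inr Unit.unit) (inr Unit.unit))⁻¹ * M (inr Unit.unit) (inl n'))) := by
      simp only [listTransvecRow, List.ofFnNthVal, hnr, dif_pos, List.getElem?_ofFn, n']
    simp only [List.take_succ, A, ← Matrix.mul_assoc, List.prod_append, Matrix.mul_one,
      List.prod_cons, List.prod_nil, Option.toList_some]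
    by_cases h : n' = i
    · have hni : n = i := by
        cases i
        simp only [n', Fin.mk_eq_mk] at h
        simp only [h]
      have : ¬n.succ ≤ i := by simp only [← hni, n.lt_succ_self, not_le]
      simp only [h, mul_tvec_apply_same, List.take, if_false,
        mul_listTransvecRow_last_col_take _ _ hnr.le, hni.le, this, if_true, IH hnr.le]
      rw [neg_mul, mul_neg, ← mul_assoc, mul_inv_cancel₀ hM, one_mul, add_neg_cancel]
    · have hni : n ≠ i := by
        rintro rfl
        cases i
        tauto
      simp only [IH hnr.le, Ne, mul_tvec_apply_of_ne, Ne.symm h, inl.injEq,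
        not_false_eq_true]
      rcases le_or_gt (n + 1) i with (hi | hi)
      · simp [hi, n.le_succ.trans hi, if_true]
      · rw [if_neg, if_neg]
        · simpa only [not_le] using hi
        · simpa only [hni.symm, not_le, or_false] using Nat.lt_succ_iff_lt_or_eq.1 hi

theorem listTransvecCol_mul_mul_listTransvecRow_last_col
    (hM : M (inr Unit.unit) (inr Unit.unit) ≠ 0) (i : Fin r) :
    ((listTransvecCol M).prod * M * (listTransvecRow M).prod) (inr Unit.unit) (inl i) = 0 := by
  have : listTransvecRow M = listTransvecRow ((listTransvecCol M).prod * M) := by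
    simp [listTransvecRow, listTransvecCol_mul_last_row]
  rw [this]
  apply mul_listTransvecRow_last_row
  simpa [listTransvecCol_mul_last_row] using hM

theorem listTransvecCol_mul_mul_listTransvecRow_last_row
    (hM : M (inr Unit.unit) (inr Unit.unit) ≠ 0) (i : Fin r) :
    ((listTransvecCol M).prod * M * (listTransvecRow M).prod) (inl i) (inr Unit.unit) = 0 := by
  have : listTransvecCol M = listTransvecCol (M * (listTransvecRow M).prod) := by
    simp [listTransvecCol, mul_listTransvecRow_last_col]
  rw [this, Matrix.mul_assoc]
  apply listTransvecCol_mul_last_col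
  simpa [mul_listTransvecRow_last_col] using hM

theorem isTwoBlockDiagonal_listTransvecCol_mul_mul_listTransvecRow
    (hM : M (inr Unit.unit) (inr Unit.unit) ≠ 0) :
    IsTwoBlockDiagonal ((listTransvecCol M).prod * M * (listTransvecRow M).prod) := by
  constructor
  · ext i j
    have : j = Unit.unit := by simp only [eq_iff_true_of_subsingleton]
    simp [toBlocks₁₂, this, listTransvecCol_mul_mul_listTransvecRow_last_row M hM]
  · ext i j
    have : i = Unit.unit := by simp only [eq_iff_true_of_subsingleton]
    simp [toBlocks₂₁, this, listTransvecCol_mul_mul_listTransvecRow_last_col M hM]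

theorem exists_isTwoBlockDiagonal_of_ne_zero (hM : M (inr Unit.unit) (inr Unit.unit) ≠ 0) :
    ∃ L L' : List (TS (Fin r ⊕ Unit) K),
      IsTwoBlockDiagonal ((L.map toMatrix).prod * M * (L'.map toMatrix).prod) := by
  let L : List (TS (Fin r ⊕ Unit) K) :=
    List.ofFn fun i : Fin r =>
      ⟨inl i, inr Unit.unit, by simp,
        -M (inl i) (inr Unit.unit) / M (inr Unit.unit) (inr Unit.unit)⟩
  let L' : List (TS (Fin r ⊕ Unit) K) :=
    List.ofFn fun i : Fin r =>
      ⟨inr Unit.unit, inl i, by simp,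
        -(M (inr Unit.unit) (inr Unit.unit))⁻¹ * M (inr Unit.unit) (inl i)⟩
  refine ⟨L, L', ?_⟩
  have A : L.map toMatrix = listTransvecCol M := by simp [L, listTransvecCol, Function.comp_def]
  have B : L'.map toMatrix = listTransvecRow M := by simp [L', listTransvecRow, Function.comp_def]
  rw [A, B]
  exact isTwoBlockDiagonal_listTransvecCol_mul_mul_listTransvecRow M hM

theorem exists_isTwoBlockDiagonal_list_transvec_mul_mul_list_transvec
    (M : Matrix (Fin r ⊕ Unit) (Fin r ⊕ Unit) K) :
    ∃ L L' : List (TS (Fin r ⊕ Unit) K),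
      IsTwoBlockDiagonal ((L.map toMatrix).prod * M * (L'.map toMatrix).prod) := by
  by_cases H : IsTwoBlockDiagonal M
  · refine ⟨List.nil, List.nil, by simpa using H⟩
  by_cases hM : M (inr Unit.unit) (inr Unit.unit) ≠ 0
  · exact exists_isTwoBlockDiagonal_of_ne_zero M hM
  push_neg at hM
  simp only [not_and_or, IsTwoBlockDiagonal, toBlocks₁₂, toBlocks₂₁, ← Matrix.ext_iff] at H
  have : ∃ i : Fin r, M (inl i) (inr Unit.unit) ≠ 0 ∨ M (inr Unit.unit) (inl i) ≠ 0 := by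
    cases' H with H H
    · contrapose! H
      rintro i ⟨⟩
      exact (H i).1
    · contrapose! H
      rintro ⟨⟩ j
      exact (H j).2
  rcases this with ⟨i, h | h⟩
  · let M' := tvec (inr Unit.unit) (inl i) 1 * M
    have hM' : M' (inr Unit.unit) (inr Unit.unit) ≠ 0 := by simpa [M', hM]
    rcases exists_isTwoBlockDiagonal_of_ne_zero M' hM' with ⟨L, L', hLL'⟩
    rw [Matrix.mul_assoc] at hLL'
    refine ⟨L ++ [⟨inr Unit.unit, inl i, by simp, 1⟩], L', ?_⟩
    simp only [List.map_append, List.prod_append, Matrix.mul_one, toMatrix_mk, List.prod_cons,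
      List.prod_nil, List.map, Matrix.mul_assoc (L.map toMatrix).prod]
    exact hLL'
  · let M' := M * tvec (inl i) (inr Unit.unit) 1
    have hM' : M' (inr Unit.unit) (inr Unit.unit) ≠ 0 := by simpa [M', hM]
    rcases exists_isTwoBlockDiagonal_of_ne_zero M' hM' with ⟨L, L', hLL'⟩
    refine ⟨L, ⟨inl i, inr Unit.unit, by simp, 1⟩::L', ?_⟩
    simp only [← Matrix.mul_assoc, toMatrix_mk, List.prod_cons, List.map]
    rw [Matrix.mul_assoc (L.map toMatrix).prod]
    exact hLL'

theorem exists_list_transvec_mul_mul_list_transvec_eq_diagonal_induction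
    (IH :
      ∀ M : Matrix (Fin r) (Fin r) K,
        ∃ (L₀ L₀' : List (TS (Fin r) K)) (D₀ : Fin r → K),
          (L₀.map toMatrix).prod * M * (L₀'.map toMatrix).prod = diagonal D₀)
    (M : Matrix (Fin r ⊕ Unit) (Fin r ⊕ Unit) K) :
    ∃ (L L' : List (TS (Fin r ⊕ Unit) K)) (D : Fin r ⊕ Unit → K),
      (L.map toMatrix).prod * M * (L'.map toMatrix).prod = diagonal D := by
  rcases exists_isTwoBlockDiagonal_list_transvec_mul_mul_list_transvec M with ⟨L₁, L₁', hM⟩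
  let M' := (L₁.map toMatrix).prod * M * (L₁'.map toMatrix).prod
  let M'' := toBlocks₁₁ M'
  rcases IH M'' with ⟨L₀, L₀', D₀, h₀⟩
  set c := M' (inr Unit.unit) (inr Unit.unit)
  refine
    ⟨L₀.map (sumInl Unit) ++ L₁, L₁' ++ L₀'.map (sumInl Unit),
      Sum.elim D₀ fun _ => M' (inr Unit.unit) (inr Unit.unit), ?_⟩
  suffices (L₀.map (toMatrix ∘ sumInl Unit)).prod * M' * (L₀'.map (toMatrix ∘ sumInl Unit)).prod =
      diagonal (Sum.elim D₀ fun _ => c) by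
    simpa [M', c, Matrix.mul_assoc]
  have : M' = fromBlocks M'' 0 0 (diagonal fun _ => c) := by
    rw [← fromBlocks_toBlocks M', hM.1, hM.2]
    rfl
  rw [this]
  simp [h₀]

theorem reindex_exists_list_transvec_mul_mul_list_transvec_eq_diagonal
    {p n : Type*} [DecidableEq p] [DecidableEq n] [Fintype p] [Fintype n]
    (M : Matrix p p K) (e : p ≃ n)
    (H :
      ∃ (L L' : List (TS n K)) (D : n → K),
        (L.map toMatrix).prod * Matrix.reindexAlgEquiv ℕ _ e M * (L'.map toMatrix).prod =
          diagonal D) :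
    ∃ (L L' : List (TS p K)) (D : p → K),
      (L.map toMatrix).prod * M * (L'.map toMatrix).prod = diagonal D := by
  rcases H with ⟨L₀, L₀', D₀, h₀⟩
  refine ⟨L₀.map (reindexEquiv e.symm), L₀'.map (reindexEquiv e.symm), D₀ ∘ e, ?_⟩
  have : M = reindexAlgEquiv ℕ _ e.symm (reindexAlgEquiv ℕ _ e M) := by
    simp only [Equiv.symm_symm, submatrix_submatrix, reindex_apply, submatrix_id_id,
      Equiv.symm_comp_self, reindexAlgEquiv_apply]
  rw [this]
  simp only [toMatrix_reindexEquiv_prod, List.map_map, reindexAlgEquiv_apply]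
  simp only [← reindexAlgEquiv_apply ℕ, ← reindexAlgEquiv_mul, h₀]
  simp only [Equiv.symm_symm, reindex_apply, submatrix_diagonal_equiv, reindexAlgEquiv_apply]

theorem exists_list_transvec_mul_mul_list_transvec_eq_diagonal_aux (n : Type) [Fintype n]
    [DecidableEq n] (M : Matrix n n K) :
    ∃ (L L' : List (TS n K)) (D : n → K),
      (L.map toMatrix).prod * M * (L'.map toMatrix).prod = diagonal D := by
  induction' hn : Fintype.card n with r IH generalizing n M
  · refine ⟨List.nil, List.nil, fun _ => 1, ?_⟩
    ext i j
    rw [Fintype.card_eq_zero_iff] at hn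
    exact hn.elim' i
  · have e : n ≃ Fin r ⊕ Unit := by
      refine Fintype.equivOfCardEq ?_
      rw [hn]
      rw [@Fintype.card_sum (Fin r) Unit _ _]
      simp
    apply reindex_exists_list_transvec_mul_mul_list_transvec_eq_diagonal M e
    apply
      exists_list_transvec_mul_mul_list_transvec_eq_diagonal_induction fun N =>
        IH (Fin r) N (by simp)

theorem exists_list_transvec_mul_mul_list_transvec_eq_diagonal
    {n : Type*} [DecidableEq n] [Fintype n] (M : Matrix n n K) :
    ∃ (L L' : List (TS n K)) (D : n → K),
      (L.map toMatrix).prod * M * (L'.map toMatrix).prod = diagonal D := by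
  have e : n ≃ Fin (Fintype.card n) := Fintype.equivOfCardEq (by simp)
  apply reindex_exists_list_transvec_mul_mul_list_transvec_eq_diagonal M e
  apply exists_list_transvec_mul_mul_list_transvec_eq_diagonal_aux

theorem exists_list_transvec_mul_diagonal_mul_list_transvec
    {n : Type*} [DecidableEq n] [Fintype n] (M : Matrix n n K) :
    ∃ (L L' : List (TS n K)) (D : n → K),
      M = (L.map toMatrix).prod * diagonal D * (L'.map toMatrix).prod := by
  rcases exists_list_transvec_mul_mul_list_transvec_eq_diagonal M with ⟨L, L', D, h⟩
  refine ⟨L.reverse.map TS.inv, L'.reverse.map TS.inv, D, ?_⟩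
  suffices
    M =
      (L.reverse.map (toMatrix ∘ TS.inv)).prod * (L.map toMatrix).prod * M *
        ((L'.map toMatrix).prod * (L'.reverse.map (toMatrix ∘ TS.inv)).prod)
    by simpa [← h, Matrix.mul_assoc]
  rw [reverse_inv_prod_mul_prod, prod_mul_reverse_inv_prod, Matrix.one_mul, Matrix.mul_one]

end Pivot

end StudyU
namespace StudyU

open TS

local notation "ℍ" => Quaternion ℝ

variable {n : ℕ}

/-- the diagonal matrix with entry `a` at position `i` and `1` elsewhere. -/
noncomputable def E (i : Fin n) (a : ℍ) : Matrix (Fin n) (Fin n) ℍ :=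
  Matrix.diagonal (Function.update (1 : Fin n → ℍ) i a)

theorem E_mul (i : Fin n) (a b : ℍ) : E i a * E i b = E i (a * b) := by
  have h : (fun k => Function.update (1 : Fin n → ℍ) i a k *
      Function.update (1 : Fin n → ℍ) i b k) =
      Function.update (1 : Fin n → ℍ) i (a * b) := by
    funext k
    by_cases h : k = i <;> simp [Function.update_apply, h]
  rw [E, E, E, Matrix.diagonal_mul_diagonal, h]

@[simp] theorem E_one (i : Fin n) : E i 1 = 1 := by
  rw [E]
  have : Function.update (1 : Fin n → ℍ) i 1 = 1 := by
    funext k; by_cases h : k = i <;> simp [Function.update_apply, h]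
  rw [this]
  exact Matrix.diagonal_one

theorem prodE (c : Fin n → ℍ) :
    ((List.finRange n).map fun j => E j (c j)).prod = Matrix.diagonal c := by
  suffices H : ∀ l : List (Fin n), l.Nodup →
      ((l.map fun j => E j (c j)).prod =
        Matrix.diagonal fun k => if k ∈ l then c k else 1) by
    rw [H _ (List.nodup_finRange n)]
    have : (fun k => if k ∈ List.finRange n then c k else 1) = c := by
      funext k
      simp [List.mem_finRange]
    rw [this]
  intro l hl
  induction l with
  | nil => simp
  | cons j l IH =>
    rw [List.map_cons, List.prod_cons, IH hl.of_cons, E, Matrix.diagonal_mul_diagonal]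
    have : (fun k => Function.update (1 : Fin n → ℍ) j (c j) k *
        if k ∈ l then c k else 1) =
        fun k => if k ∈ j :: l then c k else 1 := by
      funext k
      by_cases hk : k = j
      · subst hk
        have : k ∉ l := (List.nodup_cons.1 hl).1
        simp [Function.update_apply, this]
      · simp [Function.update_apply, hk, List.mem_cons, hk]
    rw [this]

/-- swap matrices conjugate `E i a` to `E j a` -/
theorem exists_swap_conj (i j : Fin n) (a : ℍ) :
    ∃ S S' : Matrix (Fin n) (Fin n) ℍ, S * S' = 1 ∧ S * E i a * S' = E j a := by
  by_cases hij : i = j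
  · exact ⟨1, 1, by simp, by simp [hij]⟩
  set σ := Equiv.swap i j with hσ
  set S : Matrix (Fin n) (Fin n) ℍ := (1 : Matrix (Fin n) (Fin n) ℍ).submatrix σ id with hS
  have hmulleft : ∀ M : Matrix (Fin n) (Fin n) ℍ, S * M = M.submatrix σ id := by
    intro M
    have := Matrix.one_submatrix_mul (α := ℍ) (⇑σ) (Equiv.refl (Fin n)) M
    simpa [hS] using this
  have hmulright : ∀ M : Matrix (Fin n) (Fin n) ℍ, M * S = M.submatrix id σ := by
    intro M
    have := Matrix.mul_submatrix_one (α := ℍ) σ (id : Fin n → Fin n) M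
    simpa [hS, Equiv.symm_swap, hσ] using this
  have hSS : S * S = 1 := by
    rw [hmulleft, hS, Matrix.submatrix_submatrix]
    have : ⇑σ ∘ ⇑σ = id := by
      funext x; simp [hσ, Equiv.swap_apply_self]
    simp [this]
  refine ⟨S, S, hSS, ?_⟩
  rw [Matrix.mul_assoc, hmulright, hmulleft, Matrix.submatrix_submatrix,
    Function.comp_id, Function.id_comp]
  have : (E i a).submatrix σ σ = E j a := by
    rw [E, E, Matrix.submatrix_diagonal_equiv]
    have : (Function.update (1 : Fin n → ℍ) i a) ∘ σ = Function.update (1 : Fin n → ℍ) j a := by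
      funext k
      by_cases hk : k = j
      · simp [Function.comp, hk, hσ, Equiv.swap_apply_right, Function.update_apply]
      · have : σ k ≠ i := by
          intro h
          apply hk
          have := congrArg σ h
          rwa [Equiv.swap_apply_self, hσ, Equiv.swap_apply_left] at this
        simp [Function.comp, Function.update_apply, this, hk]
    rw [this]
  exact this

/-- every quaternion is intertwined with its star by a nonzero quaternion -/
theorem exists_conjugator (u : ℍ) : ∃ w : ℍ, w ≠ 0 ∧ w * u = star u * w := by
  by_cases h1 : u.imI = 0 ∧ u.imJ = 0
  · by_cases h2 : u.imK = 0
    · refine ⟨1, one_ne_zero, ?_⟩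
      have : star u = u := by
        ext <;> simp [h1.1, h1.2, h2]
      rw [this, one_mul, mul_one]
    · refine ⟨id ⟨0, 1, 0, 0⟩, ?_, ?_⟩
      · intro h
        have := congrArg QuaternionAlgebra.imI h
        simpa [id, Quaternion.imI_zero, Quaternion.imJ_zero] using this
      · ext <;>
          simp [Quaternion.re_mul, Quaternion.imI_mul, Quaternion.imJ_mul, Quaternion.imK_mul,
            h1.1, h1.2] <;> simp only [id] <;> ring
  · refine ⟨id ⟨0, u.imJ, -u.imI, 0⟩, ?_, ?_⟩
    · intro h
      apply h1
      constructor
      · have := congrArg QuaternionAlgebra.imJ h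
        simpa [id, Quaternion.imI_zero, Quaternion.imJ_zero] using this
      · have := congrArg QuaternionAlgebra.imI h
        simpa [id, Quaternion.imI_zero, Quaternion.imJ_zero] using this
    · ext <;>
        simp [Quaternion.re_mul, Quaternion.imI_mul, Quaternion.imJ_mul, Quaternion.imK_mul] <;> simp only [id] <;>
        ring

theorem nnreal_pow_inj {x y : ℝ≥0} {m : ℕ} (hm : m ≠ 0) (h : x ^ m = y ^ m) : x = y := by
  rcases lt_trichotomy x y with hxy | hxy | hxy
  · exact absurd h (ne_of_lt (pow_lt_pow_left₀ hxy zero_le hm))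
  · exact hxy
  · exact absurd h.symm (ne_of_lt (pow_lt_pow_left₀ hxy zero_le hm))

section D

variable (hn : 1 ≤ n) (D : Matrix (Fin n) (Fin n) ℍ → ℝ≥0)
  (hmul : ∀ M N, D (M * N) = D M * D N)
  (hscal : ∀ q : ℍ, D (q • (1 : Matrix (Fin n) (Fin n) ℍ)) = ‖q‖₊ ^ n)

include hmul hscal

theorem D_one : D 1 = 1 := by
  have := hscal 1
  simpa using this

theorem D_conj {S S' : Matrix (Fin n) (Fin n) ℍ} (h : S * S' = 1)
    (A : Matrix (Fin n) (Fin n) ℍ) : D (S * A * S') = D A := by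
  have h1 : D S * D S' = 1 := by rw [← hmul, h, D_one D hmul hscal]
  rw [hmul, hmul]
  calc D S * D A * D S' = D S * D S' * D A := by ring
    _ = D A := by rw [h1, one_mul]

theorem D_E_swap (i j : Fin n) (a : ℍ) : D (E i a) = D (E j a) := by
  obtain ⟨S, S', h1, h2⟩ := exists_swap_conj i j a
  rw [← h2, D_conj D hmul hscal h1]

include hn

theorem D_diag_smul (q : ℍ) : D (Matrix.diagonal (fun _ => q)) = ‖q‖₊ ^ n := by
  rw [← Matrix.smul_one_eq_diagonal, hscal]

theorem D_list (c : Fin n → ℍ) :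
    D (Matrix.diagonal c) = ((List.finRange n).map fun j => D (E j (c j))).prod := by
  rw [← prodE c]
  generalize List.finRange n = l
  induction l with
  | nil => simp [D_one D hmul hscal]
  | cons j l IH => simp [hmul, IH]

theorem D_E_zero (i : Fin n) : D (E i 0) = 0 := by
  have h0 : D (Matrix.diagonal (fun _ : Fin n => (0 : ℍ))) = 0 := by
    rw [D_diag_smul hn D hmul hscal]
    simp [pow_eq_zero_iff (Nat.one_le_iff_ne_zero.1 hn)]
  rw [D_list hn D hmul hscal] at h0
  have h1 := List.prod_eq_zero_iff.1 h0
  simp only [List.mem_map] at h1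
  obtain ⟨j, _, hj0⟩ := h1
  rw [D_E_swap D hmul hscal i j]
  exact hj0

theorem D_E_real (i : Fin n) (r : ℝ) : D (E i (r : ℍ)) = ‖r‖₊ := by
  have h0 : D (Matrix.diagonal (fun _ : Fin n => (r : ℍ))) = ‖r‖₊ ^ n := by
    rw [D_diag_smul hn D hmul hscal, Quaternion.nnnorm_coe]
  rw [D_list hn D hmul hscal] at h0
  have hconst : ∀ j : Fin n, D (E j (r : ℍ)) = D (E i (r : ℍ)) := fun j =>
    D_E_swap D hmul hscal j i _
  rw [List.map_congr_left (fun j _ => hconst j)] at h0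
  rw [List.map_const', List.prod_replicate, List.length_finRange] at h0
  exact nnreal_pow_inj (Nat.one_le_iff_ne_zero.1 hn) h0

theorem D_E_unit (i : Fin n) (u : ℍ) (hu : ‖u‖₊ = 1) : D (E i u) = 1 := by
  have hnorm : u * star u = 1 := by
    rw [Quaternion.self_mul_star]
    have : Quaternion.normSq u = 1 := by
      rw [Quaternion.normSq_eq_norm_mul_self]
      have : ‖u‖ = 1 := by
        have := congrArg (fun x : ℝ≥0 => (x : ℝ)) hu
        simpa using this
      rw [this, one_mul]
    rw [this]
    simp
  obtain ⟨w, hw, hwu⟩ := exists_conjugator u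
  have hconj : E i w * E i u * E i w⁻¹ = E i (star u) := by
    rw [E_mul, E_mul, hwu, mul_assoc, mul_inv_cancel₀ hw, mul_one]
  have hww : E i w * E i w⁻¹ = 1 := by
    rw [E_mul, mul_inv_cancel₀ hw, E_one]
  have key : D (E i u) = D (E i (star u)) := by
    rw [← hconj]
    exact (D_conj D hmul hscal hww (E i u)).symm
  have key2 : D (E i u) * D (E i (star u)) = 1 := by
    rw [← hmul, E_mul, hnorm, E_one, D_one D hmul hscal]
  rw [← key] at key2
  have : D (E i u) ^ 2 = 1 ^ 2 := by rw [sq, key2, one_pow]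
  exact nnreal_pow_inj (by norm_num) this

theorem D_E (i : Fin n) (q : ℍ) : D (E i q) = ‖q‖₊ := by
  by_cases hq : q = 0
  · rw [hq, D_E_zero hn D hmul hscal]
    simp
  · have hq' : ‖q‖ ≠ (0 : ℝ) := norm_ne_zero_iff.2 hq
    have hnq : ((‖q‖ : ℝ) : ℍ) ≠ 0 := by
      intro h
      rw [show (0 : ℍ) = ((0 : ℝ) : ℍ) by norm_cast] at h
      exact hq' (Quaternion.coe_injective h)
    set u : ℍ := ((‖q‖ : ℝ) : ℍ)⁻¹ * q with hu
    have hqu : q = ((‖q‖ : ℝ) : ℍ) * u := by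
      rw [hu, ← mul_assoc, mul_inv_cancel₀ hnq, one_mul]
    have hun : ‖u‖₊ = 1 := by
      rw [hu, nnnorm_mul, nnnorm_inv, Quaternion.nnnorm_coe, nnnorm_norm,
        inv_mul_cancel₀ (nnnorm_ne_zero_iff.2 hq)]
    rw [hqu, ← E_mul, hmul, D_E_real hn D hmul hscal, D_E_unit hn D hmul hscal i u hun,
      mul_one]
    rw [nnnorm_norm]
    rw [← hqu]

theorem D_diagonal (d : Fin n → ℍ) : D (Matrix.diagonal d) = ∏ i, ‖d i‖₊ := by
  rw [D_list hn D hmul hscal]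
  rw [List.map_congr_left (fun j _ => D_E hn D hmul hscal j (d j))]
  rw [← List.ofFn_eq_map, List.prod_ofFn]

theorem D_tvec (i j : Fin n) (hij : i ≠ j) (c : ℍ) : D (tvec i j c) = 1 := by
  have ht2 : (2 : ℍ) ≠ 0 := by
    rw [show (2 : ℍ) = ((2 : ℝ) : ℍ) by norm_cast, show (0 : ℍ) = ((0 : ℝ) : ℍ) by norm_cast,
      ne_eq, Quaternion.coe_inj]
    norm_num
  have hne : D (tvec i j c) ≠ 0 := by
    intro h0
    have : D (tvec i j c) * D (tvec i j (-c)) = 1 := by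
      rw [← hmul, tvec_mul_tvec_same i j hij, add_neg_cancel, tvec_zero, D_one D hmul hscal]
    rw [h0, zero_mul] at this
    exact zero_ne_one this
  -- conjugation by diagonal: E i 2 * tvec i j c * E i 2⁻¹ = tvec i j (2 * c)
  have hconj : E i 2 * tvec i j c * E i 2⁻¹ = tvec i j (2 * c) := by
    refine Matrix.ext fun a b => ?_
    rw [E, E, tvec, tvec, Matrix.mul_diagonal, Matrix.diagonal_mul]
    simp only [Matrix.add_apply, Matrix.one_apply, Matrix.single, Matrix.of_apply,
      Function.update_apply, Pi.one_apply]
    by_cases ha : a = i <;> by_cases hb : b = j <;> by_cases hab : a = b <;>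
      simp_all [hij, Ne.symm hij] <;>
      split_ifs <;>
      simp_all <;>
      try rw [mul_inv_cancel₀ ht2]
  have hww : E i 2 * E i 2⁻¹ = 1 := by
    rw [E_mul, mul_inv_cancel₀ ht2, E_one]
  have h2 : D (tvec i j (2 * c)) = D (tvec i j c) := by
    rw [← hconj]
    exact D_conj D hmul hscal hww (tvec i j c)
  have h3 : D (tvec i j (2 * c)) = D (tvec i j c) * D (tvec i j c) := by
    rw [two_mul, ← tvec_mul_tvec_same i j hij, hmul]
  rw [h2] at h3
  exact (mul_left_cancel₀ hne (by rw [← h3, mul_one])).symm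

theorem D_TS_prod (L : List (TS (Fin n) ℍ)) : D (L.map toMatrix).prod = 1 := by
  induction L with
  | nil => simpa using D_one D hmul hscal
  | cons t L IH =>
    rcases t with ⟨i, j, hij, c⟩
    rw [List.map_cons, List.prod_cons, hmul, IH]
    rw [toMatrix_mk, D_tvec hn D hmul hscal i j hij c, one_mul]

end D

end StudyU

open Matrix
open scoped NNReal

/-- Two multiplicative functionals `ℍ^{n×n} → ℝ≥0` satisfying the scaling condition
`D (q • I) = ‖q‖ⁿ` coincide. -/
theorem study_determinant_unique (n : ℕ) (hn : 1 ≤ n)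
    (D₁ D₂ : Matrix (Fin n) (Fin n) (Quaternion ℝ) → ℝ≥0)
    (hD₁mul : ∀ M N, D₁ (M * N) = D₁ M * D₁ N)
    (hD₂mul : ∀ M N, D₂ (M * N) = D₂ M * D₂ N)
    (hD₁scal : ∀ q : Quaternion ℝ, D₁ (q • (1 : Matrix (Fin n) (Fin n) (Quaternion ℝ))) = ‖q‖₊ ^ n)
    (hD₂scal : ∀ q : Quaternion ℝ, D₂ (q • (1 : Matrix (Fin n) (Fin n) (Quaternion ℝ))) = ‖q‖₊ ^ n) :
    ∀ M, D₁ M = D₂ M := by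
  intro M
  obtain ⟨L, L', d, rfl⟩ :=
    StudyU.Pivot.exists_list_transvec_mul_diagonal_mul_list_transvec (K := Quaternion ℝ) M
  rw [hD₁mul, hD₁mul, hD₂mul, hD₂mul]
  rw [StudyU.D_TS_prod hn D₁ hD₁mul hD₁scal, StudyU.D_TS_prod hn D₁ hD₁mul hD₁scal,
    StudyU.D_TS_prod hn D₂ hD₂mul hD₂scal, StudyU.D_TS_prod hn D₂ hD₂mul hD₂scal,
    StudyU.D_diagonal hn D₁ hD₁mul hD₁scal, StudyU.D_diagonal hn D₂ hD₂mul hD₂scal]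
end

section
/- For every quaternionic n×n matrix M, the complex number det 𝒵[M] is a nonnegative real number; that is, its imaginary part is zero and its real part is ≥ 0. -/
open Matrix
open scoped NNReal

/-- The complex number `z` with `q = z + j·w` for a quaternion `q`. -/
noncomputable def quatC1 (q : Quaternion ℝ) : ℂ := ⟨q.re, q.imI⟩

/-- The complex number `w` with `q = z + j·w` for a quaternion `q`. -/
noncomputable def quatC2 (q : Quaternion ℝ) : ℂ := ⟨q.imJ, -q.imK⟩

/-- The complexification `𝒵[M] = [[M₁, −M₂*],[M₂, M₁*]]` of a quaternionic matrix
`M = M₁ + j·M₂`, where `*` denotes entrywise complex conjugation. -/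
noncomputable def Zmat {m : Type*} [Fintype m] [DecidableEq m]
    (M : Matrix m m (Quaternion ℝ)) : Matrix (m ⊕ m) (m ⊕ m) ℂ :=
  Matrix.fromBlocks (M.map quatC1) (-(M.map fun q => star (quatC2 q)))
    (M.map quatC2) (M.map fun q => star (quatC1 q))

lemma quatC1_zero : quatC1 0 = 0 := by simp [quatC1, Complex.ext_iff, Quaternion.re_zero, Quaternion.imI_zero, Quaternion.imJ_zero, Quaternion.imK_zero]
lemma quatC2_zero : quatC2 0 = 0 := by simp [quatC2, Complex.ext_iff, Quaternion.re_zero, Quaternion.imI_zero, Quaternion.imJ_zero, Quaternion.imK_zero]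
lemma quatC1_one : quatC1 1 = 1 := by simp [quatC1, Complex.ext_iff, Quaternion.re_one, Quaternion.imI_one, Quaternion.imJ_one, Quaternion.imK_one]
lemma quatC2_one : quatC2 1 = 0 := by simp [quatC2, Complex.ext_iff, Quaternion.re_one, Quaternion.imI_one, Quaternion.imJ_one, Quaternion.imK_one]

lemma quatC1_mul (p q : Quaternion ℝ) :
    quatC1 (p * q) = quatC1 p * quatC1 q - star (quatC2 p) * quatC2 q := by
  apply Complex.ext <;>
    simp [quatC1, quatC2, Quaternion.re_mul, Quaternion.imI_mul, Complex.mul_re,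
      Complex.mul_im] <;> ring

lemma quatC2_mul (p q : Quaternion ℝ) :
    quatC2 (p * q) = quatC2 p * quatC1 q + star (quatC1 p) * quatC2 q := by
  apply Complex.ext <;>
    simp [quatC1, quatC2, Quaternion.imJ_mul, Quaternion.imK_mul, Complex.mul_re,
      Complex.mul_im] <;> ring

lemma quatC1_add (p q : Quaternion ℝ) : quatC1 (p + q) = quatC1 p + quatC1 q := by
  apply Complex.ext <;> simp [quatC1]

lemma quatC2_add (p q : Quaternion ℝ) : quatC2 (p + q) = quatC2 p + quatC2 q := by
  apply Complex.ext <;> simp [quatC2] ; ring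

lemma quatC1_sum {ι : Type*} (s : Finset ι) (f : ι → Quaternion ℝ) :
    quatC1 (∑ i ∈ s, f i) = ∑ i ∈ s, quatC1 (f i) :=
  map_sum (AddMonoidHom.mk' quatC1 quatC1_add) f s

lemma quatC2_sum {ι : Type*} (s : Finset ι) (f : ι → Quaternion ℝ) :
    quatC2 (∑ i ∈ s, f i) = ∑ i ∈ s, quatC2 (f i) :=
  map_sum (AddMonoidHom.mk' quatC2 quatC2_add) f s

variable {m : Type*} [Fintype m] [DecidableEq m]

lemma Zmat_mul (M N : Matrix m m (Quaternion ℝ)) :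
    Zmat (M * N) = Zmat M * Zmat N := by
  ext i j
  cases i <;> cases j <;>
    simp only [Zmat, fromBlocks_apply₁₁, fromBlocks_apply₁₂, fromBlocks_apply₂₁,
      fromBlocks_apply₂₂, Matrix.map_apply, Matrix.mul_apply, Fintype.sum_sum_type,
      Matrix.neg_apply, quatC1_sum, quatC2_sum, quatC1_mul, quatC2_mul] <;>
  · try simp only [star_sum, ← Finset.sum_neg_distrib, ← Finset.sum_add_distrib]
    try refine Finset.sum_congr rfl fun k _ => ?_
    try simp only [star_add, star_sub, star_mul', star_star, star_neg]
    try ring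

lemma Zmat_submatrix {m' : Type*} [Fintype m'] [DecidableEq m']
    (M : Matrix m m (Quaternion ℝ)) (e : m' ≃ m) :
    Zmat (M.submatrix e e) = (Zmat M).submatrix (Equiv.sumCongr e e) (Equiv.sumCongr e e) := by
  ext i j
  cases i <;> cases j <;> rfl

lemma det_Zmat_submatrix {m' : Type*} [Fintype m'] [DecidableEq m']
    (M : Matrix m m (Quaternion ℝ)) (e : m' ≃ m) :
    (Zmat (M.submatrix e e)).det = (Zmat M).det := by
  rw [Zmat_submatrix, det_submatrix_equiv_self]

lemma det_Zmat_diagonal (d : m → Quaternion ℝ) :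
    (Zmat (diagonal d)).det = ∏ i, ((‖d i‖ ^ 2 : ℝ) : ℂ) := by
  classical
  let B : m → Matrix (Fin 2) (Fin 2) ℂ := fun i =>
    !![quatC1 (d i), -star (quatC2 (d i)); quatC2 (d i), star (quatC1 (d i))]
  let e : (m ⊕ m) ≃ (Fin 2 × m) :=
    ⟨Sum.elim (fun i => ((0 : Fin 2), i)) (fun i => (1, i)),
     fun p => if p.1 = 0 then Sum.inl p.2 else Sum.inr p.2,
     by rintro (i | i) <;> simp,
     by rintro ⟨a, i⟩; fin_cases a <;> simp⟩
  have h : Zmat (diagonal d) = (Matrix.blockDiagonal B).submatrix e e := by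
    ext i j
    cases' i with i i <;> cases' j with j j <;>
      simp only [Zmat, fromBlocks_apply₁₁, fromBlocks_apply₁₂, fromBlocks_apply₂₁,
        fromBlocks_apply₂₂, Matrix.map_apply, Matrix.neg_apply, submatrix_apply,
        Equiv.coe_fn_mk, Sum.elim_inl, Sum.elim_inr, Matrix.blockDiagonal_apply,
        diagonal_apply] <;>
      by_cases hij : i = j <;>
      simp [hij, B, e, quatC1, quatC2, Complex.ext_iff, Quaternion.re_zero, Quaternion.imI_zero, Quaternion.imJ_zero, Quaternion.imK_zero]
  rw [h, det_submatrix_equiv_self, Matrix.det_blockDiagonal]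
  refine Finset.prod_congr rfl fun i _ => ?_
  rw [Matrix.det_fin_two]
  have h1 : (B i 0 0) = quatC1 (d i) := rfl
  have h2 : (B i 0 1) = -star (quatC2 (d i)) := rfl
  have h3 : (B i 1 0) = quatC2 (d i) := rfl
  have h4 : (B i 1 1) = star (quatC1 (d i)) := rfl
  rw [h1, h2, h3, h4]
  have : ‖d i‖ ^ 2 = Complex.normSq (quatC1 (d i)) + Complex.normSq (quatC2 (d i)) := by
    rw [sq, ← Quaternion.normSq_eq_norm_mul_self, Quaternion.normSq_def']
    simp [quatC1, quatC2, Complex.normSq_mk]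
    ring
  rw [this]
  rw [show quatC1 (d i) * star (quatC1 (d i)) - -star (quatC2 (d i)) * quatC2 (d i)
      = quatC1 (d i) * star (quatC1 (d i)) + quatC2 (d i) * star (quatC2 (d i)) by ring]
  simp only [Complex.star_def, Complex.mul_conj]
  push_cast
  ring

lemma det_Zmat_fromBlocks {l l' : Type*} [Fintype l] [DecidableEq l] [Fintype l'] [DecidableEq l']
    (A : Matrix l l (Quaternion ℝ)) (b : Matrix l l' (Quaternion ℝ))
    (D : Matrix l' l' (Quaternion ℝ)) :
    (Zmat (fromBlocks A b 0 D)).det = (Zmat A).det * (Zmat D).det := by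
  classical
  let σ : ((l ⊕ l) ⊕ (l' ⊕ l')) ≃ ((l ⊕ l') ⊕ (l ⊕ l')) := Equiv.sumSumSumComm l l l' l'
  let X : Matrix (l ⊕ l) (l' ⊕ l') ℂ :=
    fromBlocks (b.map quatC1) (-(b.map fun q => star (quatC2 q)))
      (b.map quatC2) (b.map fun q => star (quatC1 q))
  have h : (Zmat (fromBlocks A b 0 D)).submatrix σ σ = fromBlocks (Zmat A) X 0 (Zmat D) := by
    ext i j
    rcases i with (x | x) | (y | y) <;> rcases j with (x' | x') | (y' | y') <;>
      simp [σ, X, Zmat, quatC1_zero, quatC2_zero]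
  rw [← det_submatrix_equiv_self σ, h, det_fromBlocks_zero₂₁]

lemma det_Zmat_permute (σ : Equiv.Perm m) (M : Matrix m m (Quaternion ℝ)) :
    (Zmat (M.submatrix σ id)).det = (Zmat M).det := by
  have h1 : Zmat (M.submatrix σ id)
      = (Zmat M).submatrix (Equiv.sumCongr σ σ) id := by
    ext i j
    cases i <;> cases j <;> rfl
  have h2 := Matrix.det_permute (Equiv.sumCongr σ σ) (Zmat M)
  rw [h1, h2, Equiv.Perm.sign_sumCongr]
  rcases Int.units_eq_one_or (Equiv.Perm.sign σ) with h | h <;> simp [h]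

lemma det_Zmat_elementary (j₀ : m) (v : m → Quaternion ℝ) (hv : v j₀ = 0) :
    (Zmat (1 + Matrix.of fun i j => if j = j₀ then v i else 0)).det = 1 := by
  classical
  let u₁ : (m ⊕ m) → ℂ := Sum.elim (fun i => quatC1 (v i)) (fun i => quatC2 (v i))
  let u₂ : (m ⊕ m) → ℂ :=
    Sum.elim (fun i => -star (quatC2 (v i))) (fun i => star (quatC1 (v i)))
  let w₁ : (m ⊕ m) → ℂ := fun j => if j = Sum.inl j₀ then 1 else 0
  let w₂ : (m ⊕ m) → ℂ := fun j => if j = Sum.inr j₀ then 1 else 0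
  have hz : replicateRow Unit w₁ * replicateCol Unit u₂ = 0 := by
    ext a c
    simp [w₁, u₂, dotProduct, hv, quatC2_zero]
  have key : Zmat (1 + Matrix.of fun i j => if j = j₀ then v i else 0)
      = (1 + replicateCol Unit u₁ * replicateRow Unit w₁) * (1 + replicateCol Unit u₂ * replicateRow Unit w₂) := by
    have expand : (1 + replicateCol Unit u₁ * replicateRow Unit w₁) * (1 + replicateCol Unit u₂ * replicateRow Unit w₂)
        = 1 + replicateCol Unit u₁ * replicateRow Unit w₁ + replicateCol Unit u₂ * replicateRow Unit w₂
          + (replicateCol Unit u₁ * replicateRow Unit w₁) * (replicateCol Unit u₂ * replicateRow Unit w₂) := by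
      noncomm_ring
    have hzero : (replicateCol Unit u₁ * replicateRow Unit w₁) * (replicateCol Unit u₂ * replicateRow Unit w₂) = 0 := by
      calc (replicateCol Unit u₁ * replicateRow Unit w₁) * (replicateCol Unit u₂ * replicateRow Unit w₂)
          = replicateCol Unit u₁ * ((replicateRow Unit w₁ * replicateCol Unit u₂) * replicateRow Unit w₂) := by
            rw [Matrix.mul_assoc, Matrix.mul_assoc]
        _ = 0 := by rw [hz, Matrix.zero_mul, Matrix.mul_zero]
    rw [expand, hzero, add_zero]
    ext i j
    cases i <;> cases j <;>
      simp [Zmat, u₁, u₂, w₁, w₂, Matrix.one_apply, Matrix.mul_apply, replicateCol, replicateRow,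
        quatC1_add, quatC2_add, apply_ite quatC1, apply_ite quatC2, quatC1_zero,
        quatC2_zero, quatC1_one, quatC2_one, Sum.inl.injEq, Sum.inr.injEq] <;>
      split_ifs <;> simp_all [hv, quatC1_zero, quatC2_zero] <;> try ring
  rw [key, det_mul, det_one_add_replicateCol_mul_replicateRow, det_one_add_replicateCol_mul_replicateRow]
  have e1 : w₁ ⬝ᵥ u₁ = 0 := by
    simp [w₁, u₁, dotProduct, hv, quatC1_zero]
  have e2 : w₂ ⬝ᵥ u₂ = 0 := by
    simp [w₂, u₂, dotProduct, hv, quatC1_zero]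
  rw [e1, e2]
  norm_num

lemma det_Zmat_exists_nonneg : ∀ (n : ℕ) (M : Matrix (Fin n) (Fin n) (Quaternion ℝ)),
    ∃ r : ℝ, 0 ≤ r ∧ (Zmat M).det = (r : ℂ) := by
  intro n
  induction n with
  | zero =>
    intro M
    exact ⟨1, zero_le_one, by simp [Matrix.det_isEmpty]⟩
  | succ n ih =>
    intro M
    by_cases hcol : ∀ i, M i 0 = 0
    · refine ⟨0, le_refl _, ?_⟩
      rw [Matrix.det_eq_zero_of_column_eq_zero (Sum.inl 0)]
      · simp
      · rintro (i | i) <;> simp [Zmat, hcol, quatC1_zero, quatC2_zero]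
    · push_neg at hcol
      obtain ⟨i₀, hi₀⟩ := hcol
      set τ : Equiv.Perm (Fin (n + 1)) := Equiv.swap 0 i₀ with hτ
      set N : Matrix (Fin (n+1)) (Fin (n+1)) (Quaternion ℝ) := M.submatrix τ id with hNdef
      have hN00 : N 0 0 = M i₀ 0 := by
        simp [hNdef, hτ, Equiv.swap_apply_left]
      set a : Quaternion ℝ := N 0 0 with hadef
      have ha : a ≠ 0 := by rw [hN00]; exact hi₀
      set v : Fin (n+1) → Quaternion ℝ :=
        fun i => if i = 0 then 0 else -(N i 0) * a⁻¹ with hvdef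
      set L : Matrix (Fin (n+1)) (Fin (n+1)) (Quaternion ℝ) :=
        1 + Matrix.of (fun i j => if j = (0 : Fin (n+1)) then v i else 0) with hLdef
      set N' := L * N with hN'def
      have hN'col : ∀ i, N' i 0 = if i = 0 then a else 0 := by
        intro i
        have hterm : ∀ k, L i k * N k 0
            = (if i = k then N k 0 else 0) + (if k = 0 then v i * N k 0 else 0) := by
          intro k
          simp only [hLdef, Matrix.add_apply, Matrix.one_apply, Matrix.of_apply]
          split_ifs <;> simp [add_mul]
        rw [hN'def, Matrix.mul_apply]
        simp only [hterm, Finset.sum_add_distrib, Finset.sum_ite_eq, Finset.sum_ite_eq',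
          Finset.mem_univ, if_true]
        by_cases hi : i = 0
        · simp [hi, hvdef, hadef]
        · have hv' : v i = -(N i 0) * a⁻¹ := by simp [hvdef, hi]
          simp only [hi, if_false, hv']
          rw [← hadef, neg_mul, neg_mul, mul_assoc, inv_mul_cancel₀ ha, mul_one,
            add_neg_cancel]
      set E : Fin (n+1) → Quaternion ℝ := fun i => if i = 0 then a⁻¹ else 1 with hEdef
      set D : Fin (n+1) → Quaternion ℝ := fun i => if i = 0 then a else 1 with hDdef
      have hDE : diagonal D * diagonal E = 1 := by
        have h1 : (fun i => D i * E i) = fun _ => (1 : Quaternion ℝ) := by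
          funext i
          by_cases hi : i = 0 <;> simp [hDdef, hEdef, hi, mul_inv_cancel₀ ha]
        rw [Matrix.diagonal_mul_diagonal, h1, Matrix.diagonal_one]
      set N'' := diagonal E * N' with hN''def
      have hfact : N' = diagonal D * N'' := by
        rw [hN''def, ← Matrix.mul_assoc, hDE, Matrix.one_mul]
      have hN''col : ∀ i, N'' i 0 = if i = 0 then 1 else 0 := by
        intro i
        rw [hN''def, Matrix.diagonal_mul, hN'col i]
        by_cases hi : i = 0 <;> simp [hi, hEdef, inv_mul_cancel₀ ha]
      set e : Fin 1 ⊕ Fin n ≃ Fin (n+1) :=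
        finSumFinEquiv.trans (finCongr (by omega)) with hedef
      have he0 : e (Sum.inl 0) = 0 := rfl
      have hene : ∀ i : Fin n, e (Sum.inr i) ≠ 0 := by
        intro i
        simp [hedef, finSumFinEquiv, Fin.ext_iff]
      set D' : Matrix (Fin n) (Fin n) (Quaternion ℝ) :=
        Matrix.of fun i j => N'' (e (Sum.inr i)) (e (Sum.inr j)) with hD'def
      have hB : N''.submatrix e e
          = fromBlocks 1 (Matrix.of fun _ j => N'' 0 (e (Sum.inr j))) 0 D' := by
        ext i j : 1
        rcases i with x | x <;> rcases j with y | y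
        · have hx : x = 0 := Subsingleton.elim _ _
          have hy : y = 0 := Subsingleton.elim _ _
          subst hx; subst hy
          simp [he0, hN''col, Matrix.one_apply]
        · have hx : x = 0 := Subsingleton.elim _ _
          subst hx
          simp [he0]
        · have hy : y = 0 := Subsingleton.elim _ _
          subst hy
          simp [he0, hN''col, hene x]
        · rfl
      obtain ⟨r, hr0, hr⟩ := ih D'
      have done1 : (Zmat (1 : Matrix (Fin 1) (Fin 1) (Quaternion ℝ))).det = 1 := by
        rw [← Matrix.diagonal_one, det_Zmat_diagonal]
        simp
      have dB : (Zmat N'').det = (r : ℂ) := by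
        rw [← det_Zmat_submatrix N'' e, hB, det_Zmat_fromBlocks, done1, one_mul, hr]
      have dN' : (Zmat N').det = (∏ i, ((‖D i‖ ^ 2 : ℝ) : ℂ)) * (r : ℂ) := by
        rw [hfact, Zmat_mul, det_mul, det_Zmat_diagonal, dB]
      have dN : (Zmat N).det = (Zmat M).det := det_Zmat_permute τ M
      have dL : (Zmat N').det = (Zmat N).det := by
        rw [hN'def, Zmat_mul, det_mul, hLdef, det_Zmat_elementary 0 v (by simp [hvdef]),
          one_mul]
      refine ⟨(∏ i, ‖D i‖ ^ 2) * r, by positivity, ?_⟩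
      rw [← dN, ← dL, dN']
      push_cast
      ring

/-- For every quaternionic matrix `M`, the q-determinant `det 𝒵[M]` is a
nonnegative real number. -/
theorem qdet_nonneg_real (n : ℕ) (M : Matrix (Fin n) (Fin n) (Quaternion ℝ)) :
    (Zmat M).det.im = 0 ∧ 0 ≤ (Zmat M).det.re := by
  obtain ⟨r, hr0, hr⟩ := det_Zmat_exists_nonneg n M
  rw [hr]
  simpa using hr0
end

section
/- There is no multiplicative functional F : ℍ^{2×2} → ℍ (i.e., satisfying F(MN) = F(M)·F(N) for all M, N ∈ ℍ^{2×2}) which coincides with the ordinary determinant on complex diagonal matrices, i.e., such that F(diag(z₁, z₂)) = z₁z₂ for all complex numbers z₁, z₂ (regarded as quaternions with zero j and k components). -/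
open Matrix

/-- The inclusion of the complex numbers into the quaternions (zero `j` and `k` parts). -/
noncomputable def complexToQuat (z : ℂ) : Quaternion ℝ := ⟨z.re, z.im, 0, 0⟩

/-- The quaternion `j`. -/
noncomputable def jq : Quaternion ℝ := ⟨0, 0, 1, 0⟩

lemma complexToQuat_one : complexToQuat 1 = 1 := by
  ext <;> simp [complexToQuat, Quaternion.re_one, Quaternion.imI_one, Quaternion.imJ_one, Quaternion.imK_one]

lemma jq_mul_negjq : jq * (-jq) = 1 := by
  ext <;> simp [Quaternion.re_one, Quaternion.imI_one, Quaternion.imJ_one, Quaternion.imK_one] <;> simp [jq]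

lemma jq_conj_I : jq * complexToQuat Complex.I * (-jq) = complexToQuat (-Complex.I) := by
  ext <;> simp <;> simp [complexToQuat, jq]

lemma complexToQuat_I_mul_I : complexToQuat (Complex.I * Complex.I) = -1 := by
  ext <;> simp [complexToQuat, Quaternion.re_one, Quaternion.imI_one, Quaternion.imJ_one, Quaternion.imK_one]

lemma complexToQuat_I_mul_negI : complexToQuat (Complex.I * -Complex.I) = 1 := by
  ext <;> simp [complexToQuat, Quaternion.re_one, Quaternion.imI_one, Quaternion.imJ_one, Quaternion.imK_one]

/-- There is no multiplicative functional `ℍ^{2×2} → ℍ` which coincides with the ordinary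
determinant on complex diagonal matrices. -/
theorem no_multiplicative_quaternionic_determinant :
    ¬ ∃ F : Matrix (Fin 2) (Fin 2) (Quaternion ℝ) → Quaternion ℝ,
      (∀ M N, F (M * N) = F M * F N) ∧
      (∀ z₁ z₂ : ℂ,
        F (Matrix.diagonal ![complexToQuat z₁, complexToQuat z₂]) = complexToQuat (z₁ * z₂)) := by
  rintro ⟨F, hmul, hdiag⟩
  have hone : F 1 = 1 := by
    have h := hdiag 1 1
    have h1 : (Matrix.diagonal ![complexToQuat 1, complexToQuat 1]
        : Matrix (Fin 2) (Fin 2) (Quaternion ℝ)) = 1 := by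
      have hv : ![complexToQuat 1, complexToQuat 1] = fun _ => (1 : Quaternion ℝ) := by
        funext a; fin_cases a <;> simp [complexToQuat_one]
      rw [hv]
      exact Matrix.diagonal_one
    rw [h1] at h
    rw [h, mul_one, complexToQuat_one]
  set P : Matrix (Fin 2) (Fin 2) (Quaternion ℝ) := Matrix.diagonal ![1, jq] with hP
  set Q : Matrix (Fin 2) (Fin 2) (Quaternion ℝ) := Matrix.diagonal ![1, -jq] with hQ
  set D1 : Matrix (Fin 2) (Fin 2) (Quaternion ℝ) :=
    Matrix.diagonal ![complexToQuat Complex.I, complexToQuat Complex.I] with hD1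
  -- F(P) * F(Q) = 1
  have hPQ : F P * F Q = 1 := by
    rw [← hmul, hP, hQ, Matrix.diagonal_mul_diagonal]
    have hv : (fun i => ![(1 : Quaternion ℝ), jq] i * ![1, -jq] i)
        = fun _ => (1 : Quaternion ℝ) := by
      funext a; fin_cases a
      · simp
      · simpa using jq_mul_negjq
    rw [hv, Matrix.diagonal_one, hone]
  -- F(D1) = -1
  have hD1v : F D1 = -1 := by
    rw [hD1, hdiag, complexToQuat_I_mul_I]
  -- P * D1 * Q = diag(cI, -cI)
  have hconj : P * D1 * Q = Matrix.diagonal ![complexToQuat Complex.I,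
      complexToQuat (-Complex.I)] := by
    rw [hP, hD1, hQ, Matrix.diagonal_mul_diagonal, Matrix.diagonal_mul_diagonal]
    refine congrArg Matrix.diagonal ?_
    funext a; fin_cases a
    · simp
    · show jq * complexToQuat Complex.I * (-jq) = complexToQuat (-Complex.I)
      exact jq_conj_I
  -- F of RHS = 1
  have hRHS : F (Matrix.diagonal ![complexToQuat Complex.I,
      complexToQuat (-Complex.I)]) = 1 := by
    rw [hdiag, complexToQuat_I_mul_negI]
  have hcontra : (1 : Quaternion ℝ) = -1 := by
    calc (1 : Quaternion ℝ) = F (P * D1 * Q) := by rw [hconj, hRHS]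
    _ = F P * F D1 * F Q := by rw [hmul, hmul]
    _ = F P * (-1) * F Q := by rw [hD1v]
    _ = -(F P * F Q) := by rw [mul_neg_one, neg_mul]
    _ = -1 := by rw [hPQ]
  have h0 : (1 : Quaternion ℝ) ≠ -1 := by
    intro h
    have := congrArg QuaternionAlgebra.re h
    norm_num [Quaternion.re_one] at this
  exact h0 hcontra
end

section
/- Let F : ℍ^{n×n} → ℝ≥0 be a non-constant multiplicative functional (F(MN) = F(M)·F(N) for all M, N). Then for every M ∈ ℍ^{n×n}, F(M) = 0 if and only if M is singular (not invertible). -/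
open Matrix
open scoped NNReal

noncomputable section MulFunAux

/-- The shift matrix: ones on the superdiagonal. -/
def shiftMat (n : ℕ) : Matrix (Fin n) (Fin n) (Quaternion ℝ) :=
  Matrix.of fun i j => if (j : ℕ) = (i : ℕ) + 1 then 1 else 0

lemma shiftMat_pow (n m : ℕ) (i j : Fin n) :
    ((shiftMat n) ^ m) i j = if (j : ℕ) = (i : ℕ) + m then 1 else 0 := by
  induction m generalizing j with
  | zero =>
    simp [Matrix.one_apply, Fin.ext_iff, eq_comm]
  | succ m ih =>
    rw [pow_succ, Matrix.mul_apply]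
    have key : ∀ x : Fin n, ((shiftMat n) ^ m) i x * (shiftMat n) x j
        = if ((x:ℕ) = (i:ℕ) + m ∧ (j:ℕ) = (x:ℕ) + 1) then 1 else 0 := by
      intro x
      rw [ih]
      by_cases h1 : (x:ℕ) = (i:ℕ) + m <;> by_cases h2 : (j:ℕ) = (x:ℕ) + 1 <;>
        simp [shiftMat, h1, h2]
    simp only [key]
    by_cases h : (i : ℕ) + m < n
    · rw [Finset.sum_eq_single (⟨(i : ℕ) + m, h⟩ : Fin n)]
      · simp [Nat.add_assoc]
      · intro b _ hb
        rw [if_neg]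
        rintro ⟨hb1, -⟩
        exact hb (Fin.ext hb1)
      · simp
    · have h2 : ¬ ((j : ℕ) = (i : ℕ) + (m + 1)) := by omega
      rw [if_neg h2, Finset.sum_eq_zero]
      intro x _
      rw [if_neg]
      rintro ⟨hx, -⟩
      exact h (hx ▸ x.isLt)

lemma shiftMat_pow_self (n : ℕ) : (shiftMat n) ^ n = 0 := by
  apply Matrix.ext
  intro i j
  rw [shiftMat_pow]
  have : ¬ ((j : ℕ) = (i : ℕ) + n) := by omega
  simp [this]

lemma shiftMat_diag (n : ℕ) (i j : Fin n) :
    ((shiftMat n)ᵀ * shiftMat n) i j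
      = if (i = j ∧ (i : ℕ) ≠ 0) then 1 else 0 := by
  rw [Matrix.mul_apply]
  simp only [Matrix.transpose_apply, shiftMat, Matrix.of_apply]
  by_cases hi : (i : ℕ) = 0
  · have : ∀ l : Fin n, ¬ ((i:ℕ) = (l:ℕ) + 1) := by omega
    simp [this, hi]
  · have hl : (i : ℕ) - 1 < n := by omega
    rw [Finset.sum_eq_single (⟨(i:ℕ) - 1, hl⟩ : Fin n)]
    · have h1 : (i : ℕ) = ((i:ℕ) - 1) + 1 := by omega
      by_cases hij : i = j
      · simp [← hij, ← h1, hi]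
      · have : ¬ ((j : ℕ) = ((i:ℕ) - 1) + 1) := by
          rw [← h1]; exact fun h => hij (Fin.ext h.symm)
        simp [this, hij]
    · intro b _ hb
      rw [if_neg, zero_mul]
      intro hcon
      apply hb
      apply Fin.ext
      show (b : ℕ) = (i : ℕ) - 1
      omega
    · simp

/-- A left inverse of a square quaternionic matrix is a right inverse. -/
lemma quat_left_inv_to_right {n : ℕ} (M B : Matrix (Fin n) (Fin n) (Quaternion ℝ))
    (h : B * M = 1) : M * B = 1 := by
  set f := M.vecMulLinear
  set g := B.vecMulLinear
  have hfg : f * g = 1 := by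
    apply LinearMap.ext
    intro x
    show (x ᵥ* B) ᵥ* M = x
    rw [Matrix.vecMul_vecMul, h, Matrix.vecMul_one]
  have hgf : g * f = 1 := mul_eq_one_comm.mp hfg
  have key : ∀ x : Fin n → Quaternion ℝ, x ᵥ* (M * B) = x := by
    intro x
    have h2 := LinearMap.ext_iff.mp hgf x
    have h3 : (x ᵥ* M) ᵥ* B = x := h2
    rwa [Matrix.vecMul_vecMul] at h3
  funext i
  have hrow := key (Pi.single i 1)
  rw [Matrix.single_one_vecMul] at hrow
  rw [show (M * B) i = Pi.single i 1 from hrow]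
  funext j
  simp [Matrix.one_apply, Pi.single_apply, eq_comm]

end MulFunAux

/-- For a non-constant multiplicative functional `F : ℍ^{n×n} → ℝ≥0`, `F(M) = 0`
if and only if `M` is singular. -/
theorem multiplicative_functional_zero_iff_singular (n : ℕ)
    (F : Matrix (Fin n) (Fin n) (Quaternion ℝ) → ℝ≥0)
    (hFmul : ∀ M N, F (M * N) = F M * F N)
    (hFnc : ∃ M N, F M ≠ F N) :
    ∀ M : Matrix (Fin n) (Fin n) (Quaternion ℝ),
      F M = 0 ↔ ¬ ∃ N, M * N = 1 ∧ N * M = 1 := by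
  intro M
  rcases Nat.eq_zero_or_pos n with rfl | hn
  · obtain ⟨A, B, hAB⟩ := hFnc
    exact absurd (congrArg F (by funext i; exact Fin.elim0 i : A = B)) hAB
  -- F 1 = 1
  have h1 : F 1 = 1 := by
    have h11 : F 1 = F 1 * F 1 := by rw [← hFmul, one_mul]
    rcases eq_or_ne (F 1) 0 with h | h
    · exfalso
      obtain ⟨A, B, hAB⟩ := hFnc
      have hA : F A = 0 := by rw [← mul_one A, hFmul, h, mul_zero]
      have hB : F B = 0 := by rw [← mul_one B, hFmul, h, mul_zero]
      exact hAB (hA.trans hB.symm)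
    · exact mul_left_cancel₀ h (by rw [← h11, mul_one])
  -- F 0 = 0
  have h0 : F 0 = 0 := by
    rcases eq_or_ne (F 0) 0 with h | h
    · exact h
    · exfalso
      have h00 : F 0 = F 0 * F 0 := by rw [← hFmul, mul_zero]
      have hF01 : F 0 = 1 := mul_left_cancel₀ h (by rw [← h00, mul_one])
      obtain ⟨A, B, hAB⟩ := hFnc
      have hall : ∀ C, F C = 1 := fun C => by
        have hC : F 0 = F C * F 0 := by rw [← hFmul, mul_zero]
        rw [hF01, mul_one] at hC
        exact hC.symm
      exact hAB ((hall A).trans (hall B).symm)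
  constructor
  · rintro hFM ⟨N, hMN, -⟩
    have : (1 : ℝ≥0) = 0 := by
      rw [← h1, ← hMN, hFmul, hFM, zero_mul]
    exact one_ne_zero this
  · intro hnot
    -- no left inverse either
    have hnoleft : ¬ ∃ B, B * M = 1 := by
      rintro ⟨B, hB⟩
      exact hnot ⟨B, quat_left_inv_to_right M B hB, hB⟩
    have hnsurj : ¬ Function.Surjective M.vecMul := by
      rw [Matrix.vecMul_surjective_iff_exists_left_inverse]
      exact hnoleft
    have hninj : ¬ Function.Injective M.vecMul := by
      intro h
      exact hnsurj (LinearMap.surjective_of_injective (f := M.vecMulLinear) h)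
    obtain ⟨x, y, hxy, hne⟩ := Function.not_injective_iff.mp hninj
    set v : Fin n → Quaternion ℝ := x - y with hv
    have hv0 : v ᵥ* M = 0 := by
      rw [hv, Matrix.sub_vecMul]
      rw [show x ᵥ* M = y ᵥ* M from hxy, sub_self]
    have hvne : v ≠ 0 := sub_ne_zero.mpr hne
    obtain ⟨k, hk⟩ : ∃ k, v k ≠ 0 := by
      by_contra h
      push_neg at h
      exact hvne (funext h)
    -- the invertible matrix Q with row k equal to v
    set Q : Matrix (Fin n) (Fin n) (Quaternion ℝ) :=
      Matrix.of fun i j => if i = k then v j else if i = j then 1 else 0 with hQ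
    set R : Matrix (Fin n) (Fin n) (Quaternion ℝ) :=
      Matrix.of fun i j =>
        if i = k then (if j = k then (v k)⁻¹ else -((v k)⁻¹ * v j))
        else if i = j then 1 else 0 with hR
    have hQR : Q * R = 1 := by
      apply Matrix.ext
      intro i j
      rw [Matrix.mul_apply]
      by_cases hik : i = k
      · subst hik
        rw [← Finset.add_sum_erase _ _ (Finset.mem_univ i)]
        have hrest : ∑ l ∈ Finset.univ.erase i, Q i l * R l j
            = if j ∈ Finset.univ.erase i then v j else 0 := by
          rw [← Finset.sum_ite_eq' (Finset.univ.erase i) j (fun l => v l)]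
          apply Finset.sum_congr rfl
          intro l hl
          have hlk : l ≠ i := (Finset.mem_erase.mp hl).1
          simp only [hQ, hR, Matrix.of_apply, if_neg hlk, if_pos rfl]
          by_cases hlj : l = j <;> simp [hlj, eq_comm]
        rw [hrest]
        by_cases hjk : j = i
        · subst hjk
          simp [hQ, hR, Matrix.one_apply, mul_inv_cancel₀ hk]
        · have hjmem : j ∈ Finset.univ.erase i := Finset.mem_erase.mpr ⟨hjk, Finset.mem_univ j⟩
          rw [if_pos hjmem, Matrix.one_apply_ne (Ne.symm hjk)]
          have e1 : Q i i * R i j = -(v j) := by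
            have hQii : Q i i = v i := by simp [hQ]
            have hRij : R i j = -((v i)⁻¹ * v j) := by simp [hR, hjk]
            rw [hQii, hRij, mul_neg, ← mul_assoc, mul_inv_cancel₀ hk, one_mul]
          rw [e1, neg_add_cancel]
      · rw [Finset.sum_eq_single i]
        · simp only [hQ, hR, Matrix.of_apply, if_neg hik, if_pos rfl, one_mul]
          by_cases hij : i = j <;> simp [hij, Matrix.one_apply, hik, Ne.symm]
        · intro b _ hb
          simp only [hQ, Matrix.of_apply, if_neg hik, if_neg (Ne.symm hb), zero_mul]
        · simp
    -- row k of Q * M is zero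
    have hQM : ∀ j, (Q * M) k j = 0 := by
      intro j
      rw [Matrix.mul_apply]
      have hterm : ∀ l, Q k l * M l j = v l * M l j := by
        intro l
        simp [hQ]
      simp only [hterm]
      exact congrFun hv0 j
    -- the transposition matrix moving row k to row 0
    set σ : Equiv.Perm (Fin n) := Equiv.swap ⟨0, hn⟩ k with hσ
    set T : Matrix (Fin n) (Fin n) (Quaternion ℝ) :=
      Matrix.of fun i j => if j = σ i then 1 else 0 with hT
    have hTmul : ∀ (C : Matrix (Fin n) (Fin n) (Quaternion ℝ)) i j,
        (T * C) i j = C (σ i) j := by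
      intro C i j
      rw [Matrix.mul_apply, Finset.sum_eq_single (σ i)]
      · simp [hT]
      · intro b _ hb
        simp [hT, hb]
      · simp
    have hTT : T * T = 1 := by
      apply Matrix.ext
      intro i j
      rw [hTmul]
      have : T (σ i) j = if j = i then 1 else 0 := by
        simp [hT, hσ, Equiv.swap_apply_self]
      rw [this]
      simp [Matrix.one_apply, eq_comm]
    -- row 0 of T * (Q * M) is zero
    have hrow0 : ∀ j, (T * (Q * M)) ⟨0, hn⟩ j = 0 := by
      intro j
      rw [hTmul]
      have hsw : σ ⟨0, hn⟩ = k := Equiv.swap_apply_left _ _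
      rw [hsw]
      exact hQM j
    -- the diagonal idempotent D absorbs T * (Q * M)
    set D := (shiftMat n)ᵀ * shiftMat n with hD
    have hDC : D * (T * (Q * M)) = T * (Q * M) := by
      apply Matrix.ext
      intro i j
      rw [Matrix.mul_apply]
      by_cases hi : (i : ℕ) = 0
      · have hi0 : i = ⟨0, hn⟩ := Fin.ext hi
        rw [Finset.sum_eq_zero, hi0, hrow0]
        intro l _
        rw [hD, shiftMat_diag]
        rw [if_neg (fun hc => hc.2 hi), zero_mul]
      · rw [Finset.sum_eq_single i]
        · rw [hD, shiftMat_diag, if_pos ⟨rfl, hi⟩, one_mul]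
        · intro b _ hb
          rw [hD, shiftMat_diag, if_neg (fun hc => hb hc.1.symm), zero_mul]
        · simp
    -- F of powers
    have hFpow : ∀ (A : Matrix (Fin n) (Fin n) (Quaternion ℝ)) (m : ℕ),
        F (A ^ m) = F A ^ m := by
      intro A m
      induction m with
      | zero => simpa using h1
      | succ m ih => rw [pow_succ, hFmul, ih, pow_succ]
    have hFshift : F (shiftMat n) = 0 := by
      have hz : F (shiftMat n) ^ n = 0 := by
        rw [← hFpow, shiftMat_pow_self, h0]
      exact (pow_eq_zero_iff hn.ne').mp hz
    have hFD : F D = 0 := by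
      rw [hD, hFmul, hFshift, mul_zero]
    have hFC : F (T * (Q * M)) = 0 := by
      have habs := hFmul D (T * (Q * M))
      rw [hDC] at habs
      rw [habs, hFD, zero_mul]
    have hFT : F T ≠ 0 := by
      intro h
      have : F (1 : Matrix (Fin n) (Fin n) (Quaternion ℝ)) = 0 := by
        rw [← hTT, hFmul, h, zero_mul]
      rw [h1] at this
      exact one_ne_zero this
    have hFQ : F Q ≠ 0 := by
      intro h
      have : F (1 : Matrix (Fin n) (Fin n) (Quaternion ℝ)) = 0 := by
        rw [← hQR, hFmul, h, zero_mul]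
      rw [h1] at this
      exact one_ne_zero this
    have hzero : F T * (F Q * F M) = 0 := by
      rw [← hFmul, ← hFmul]
      exact hFC
    rcases mul_eq_zero.mp hzero with h | h
    · exact absurd h hFT
    · rcases mul_eq_zero.mp h with h' | h'
      · exact absurd h' hFQ
      · exact h'
end

section
/- Let q ∈ ℍ and let s ∈ ℍ be nonzero. Then s⁻¹ q s = q̄ (the quaternionic conjugate of q) if and only if Im q = 0, or both Re(qs) = 0 and Re s = 0. Moreover, there exists no single nonzero s ∈ ℍ such that s⁻¹ q s = q̄ for all q ∈ ℍ. -/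
lemma quat_conj_aux (q s : Quaternion ℝ) (hs : s ≠ 0) :
    s⁻¹ * q * s = star q ↔ (q.im = 0 ∨ ((q * s).re = 0 ∧ s.re = 0)) := by
  have key : s⁻¹ * q * s = star q ↔ q * s = s * star q := by
    constructor
    · intro h
      calc q * s = s * (s⁻¹ * q * s) := by
            rw [← mul_assoc, ← mul_assoc, mul_inv_cancel₀ hs, one_mul]
        _ = s * star q := by rw [h]
    · intro h
      rw [mul_assoc, h, ← mul_assoc, inv_mul_cancel₀ hs, one_mul]
  rw [key]
  rw [Quaternion.ext_iff (a := q.im), Quaternion.re_im, Quaternion.imI_im, Quaternion.imJ_im,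
    Quaternion.imK_im]
  obtain ⟨a, b, c, d, rfl⟩ : ∃ a b c d : ℝ, q = @id (Quaternion ℝ) ⟨a, b, c, d⟩ :=
    ⟨q.re, q.imI, q.imJ, q.imK, rfl⟩
  obtain ⟨x, y, z, w, rfl⟩ : ∃ x y z w : ℝ, s = @id (Quaternion ℝ) ⟨x, y, z, w⟩ :=
    ⟨s.re, s.imI, s.imJ, s.imK, rfl⟩
  simp only [Quaternion.ext_iff, Quaternion.re_mul, Quaternion.imI_mul,
    Quaternion.imJ_mul, Quaternion.imK_mul, Quaternion.re_star,
    Quaternion.imI_star, Quaternion.imJ_star, Quaternion.imK_star,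
    Quaternion.im, Quaternion.re_zero, Quaternion.imI_zero,
    Quaternion.imJ_zero, Quaternion.imK_zero]
  dsimp only [id]
  constructor
  · rintro ⟨h1, h2, h3, h4⟩
    have e1 : b * y + c * z + d * w = 0 := by linear_combination -h1 / 2
    have e2 : b * x = 0 := by linear_combination h2 / 2
    have e3 : c * x = 0 := by linear_combination h3 / 2
    have e4 : d * x = 0 := by linear_combination h4 / 2
    by_cases hbcd : b = 0 ∧ c = 0 ∧ d = 0
    · exact Or.inl ⟨trivial, hbcd.1, hbcd.2.1, hbcd.2.2⟩
    · right
      have hx : x = 0 := by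
        by_contra hx
        exact hbcd ⟨(mul_eq_zero.mp e2).resolve_right hx,
          (mul_eq_zero.mp e3).resolve_right hx,
          (mul_eq_zero.mp e4).resolve_right hx⟩
      subst hx
      exact ⟨by linear_combination -e1, rfl⟩
  · rintro (⟨-, hb, hc, hd⟩ | ⟨h1, h2⟩)
    · subst hb; subst hc; subst hd
      exact ⟨by ring, by ring, by ring, by ring⟩
    · subst h2
      exact ⟨by linear_combination 2 * h1, by ring, by ring, by ring⟩

/-- A nonzero `s` conjugates `q` to `q̄` iff `Im q = 0` or `Re(qs) = Re s = 0`;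
moreover no single nonzero `s` conjugates every quaternion to its conjugate. -/
theorem quaternion_conjugation_to_conjugate :
    (∀ q s : Quaternion ℝ, s ≠ 0 →
      (s⁻¹ * q * s = star q ↔ (q.im = 0 ∨ ((q * s).re = 0 ∧ s.re = 0)))) ∧
    ¬ ∃ s : Quaternion ℝ, s ≠ 0 ∧ ∀ q : Quaternion ℝ, s⁻¹ * q * s = star q := by
  refine ⟨quat_conj_aux, ?_⟩
  rintro ⟨s, hs, h⟩
  have hi := (quat_conj_aux (@id (Quaternion ℝ) ⟨0,1,0,0⟩) s hs).mp (h _)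
  have hj := (quat_conj_aux (@id (Quaternion ℝ) ⟨0,0,1,0⟩) s hs).mp (h _)
  have hk := (quat_conj_aux (@id (Quaternion ℝ) ⟨0,0,0,1⟩) s hs).mp (h _)
  simp only [Quaternion.ext_iff, Quaternion.re_mul, Quaternion.re_im, Quaternion.imI_im,
    Quaternion.imJ_im, Quaternion.imK_im, Quaternion.re_zero, Quaternion.imI_zero,
    Quaternion.imJ_zero, Quaternion.imK_zero] at hi hj hk
  dsimp only [id] at hi hj hk
  norm_num [Quaternion.ext_iff, Quaternion.re_mul] at hi hj hk
  apply hs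
  refine Quaternion.ext (a := s) (b := 0) ?_ ?_ ?_ ?_ <;> simp [Quaternion.re_zero, Quaternion.imI_zero, Quaternion.imJ_zero, Quaternion.imK_zero] <;> tauto
end

section
/- For all quaternions a, b, c, d with b ≠ 0, the quadratic equation α²b + α(d − a) − c = 0 has a solution α ∈ ℍ. -/
open Quaternion

abbrev H := Quaternion ℝ

lemma arithA (t np s0 k n : ℝ) (hnt : n * t = (s0 + (t ^ 2 + np) / 2) * t - k) :
    t * (n - s0) + k = t / 2 * (t ^ 2 + np) := by
  linear_combination hnt
lemma arithB (t np s0 k ns n : ℝ) (ht : t ≠ 0)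
    (hnt : n * t = (s0 + (t ^ 2 + np) / 2) * t - k)
    (h0 : t ^ 2 * (s0 + (t ^ 2 + np) / 2) ^ 2 - k ^ 2 - t ^ 2 * ns = 0) :
    n ^ 2 - 2 * n * s0 + ns = n * (t ^ 2 + np) := by
  have h : (n ^ 2 - 2 * n * s0 + ns - n * (t ^ 2 + np)) * t ^ 2 = 0 := by
    linear_combination (n * t - (s0 + (t ^ 2 + np) / 2) * t - k) * hnt - h0
  have ht2 : t ^ 2 ≠ 0 := pow_ne_zero _ ht
  have := (mul_eq_zero.mp h).resolve_right ht2
  linarith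



lemma CH (z : H) : z * z = ((2 * z.re : ℝ) : H) * z - ((normSq z : ℝ) : H) := by
  ext <;>
    simp only [Quaternion.re_mul, Quaternion.imI_mul, Quaternion.imJ_mul, Quaternion.imK_mul,
      Quaternion.re_sub, Quaternion.imI_sub, Quaternion.imJ_sub, Quaternion.imK_sub,
      Quaternion.re_coe, Quaternion.imI_coe, Quaternion.imJ_coe, Quaternion.imK_coe,
      Quaternion.normSq_def'] <;>
    ring

lemma key (p s : H) (t n : ℝ) (hp : p.re = 0)
    (hD : t ^ 2 + normSq p ≠ 0)
    (hA : t * (n - s.re) + (p * s).re = t / 2 * (t ^ 2 + normSq p))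
    (hB : n ^ 2 - 2 * n * s.re + normSq s = n * (t ^ 2 + normSq p)) :
    ∃ z : H, z * z + p * z + s = 0 := by
  set w : H := ((t : H) - p) * ((n : H) - s) with hw
  set z : H := ((t ^ 2 + normSq p)⁻¹ : ℝ) • w with hz
  simp only [Quaternion.re_mul, Quaternion.normSq_def'] at hA hB hD
  have h1 : ((t : H) + p) * z = (n : H) - s := by
    have hpp : p * p = -((normSq p : ℝ) : H) := by
      have h := Quaternion.self_mul_star p
      have hsp : star p = -p := by ext <;> simp [hp]
      rw [hsp, mul_neg] at h
      exact neg_eq_iff_eq_neg.mp h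
    have hc : p * (t : H) = (t : H) * p := (Quaternion.coe_commutes t p).symm
    have h2 : ((t : H) + p) * ((t : H) - p) = ((t ^ 2 + normSq p : ℝ) : H) := by
      have e1 : ((t : H) + p) * ((t : H) - p) = (t : H) * (t : H) - p * p := by
        rw [add_mul, mul_sub, mul_sub, hc]; noncomm_ring
      rw [e1, hpp]
      push_cast
      noncomm_ring
    rw [hz, mul_smul_comm, hw, ← mul_assoc, h2, Quaternion.coe_mul_eq_smul, smul_smul]
    rw [inv_mul_cancel₀ (by simpa [Quaternion.normSq_def'] using hD), one_smul]
  have hre : z.re = t / 2 := by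
    have hw_re : w.re = t / 2 * (t ^ 2 + normSq p) := by
      rw [hw]
      simp only [Quaternion.re_mul, Quaternion.re_sub, Quaternion.re_coe, Quaternion.imI_sub,
        Quaternion.imI_coe, Quaternion.imJ_sub, Quaternion.imJ_coe, Quaternion.imK_sub,
        Quaternion.imK_coe, Quaternion.normSq_def']
      linear_combination hA - n * hp
    rw [hz]
    simp only [Quaternion.re_smul, smul_eq_mul, hw_re, Quaternion.normSq_def'] at *
    field_simp
    try ring
  have hns : normSq z = n := by
    have hw1 : normSq ((t : H) - p) = t ^ 2 + normSq p := by
      simp only [Quaternion.normSq_def', Quaternion.re_sub, Quaternion.re_coe,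
        Quaternion.imI_sub, Quaternion.imI_coe, Quaternion.imJ_sub, Quaternion.imJ_coe,
        Quaternion.imK_sub, Quaternion.imK_coe, hp]
      ring
    have hw2 : normSq ((n : H) - s) = n * (t ^ 2 + normSq p) := by
      simp only [Quaternion.normSq_def', Quaternion.re_sub, Quaternion.re_coe,
        Quaternion.imI_sub, Quaternion.imI_coe, Quaternion.imJ_sub, Quaternion.imJ_coe,
        Quaternion.imK_sub, Quaternion.imK_coe]
      linear_combination hB
    rw [hz, Quaternion.normSq_smul, hw, map_mul, hw1, hw2]
    simp only [Quaternion.normSq_def'] at *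
    field_simp
    try ring
  refine ⟨z, ?_⟩
  have ht2 : 2 * (t / 2) = t := by ring
  have h4 : z * z = (t : H) * z - (n : H) := by rw [CH z, hre, hns, ht2]
  have h5 : z * z + p * z + s = ((t : H) + p) * z - (n : H) + s := by
    rw [h4]; noncomm_ring
  rw [h5, h1]
  noncomm_ring


lemma solve_depressed (p s : H) (hp : p.re = 0) : ∃ z : H, z * z + p * z + s = 0 := by
  have hnp0 : 0 ≤ normSq p := normSq_nonneg
  have hns0 : 0 ≤ normSq s := normSq_nonneg
  by_cases hk0 : (p * s).re = 0
  · by_cases hc : 0 < 2 * Real.sqrt (normSq s) - 2 * s.re - normSq p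
    · have ht2 : (Real.sqrt (2 * Real.sqrt (normSq s) - 2 * s.re - normSq p)) ^ 2
          = 2 * Real.sqrt (normSq s) - 2 * s.re - normSq p := Real.sq_sqrt hc.le
      have hn2 : (Real.sqrt (normSq s)) ^ 2 = normSq s := Real.sq_sqrt hns0
      refine key p s (Real.sqrt (2 * Real.sqrt (normSq s) - 2 * s.re - normSq p))
        (Real.sqrt (normSq s)) hp ?_ ?_ ?_
      · rw [ht2]; intro h; nlinarith [Real.sqrt_nonneg (normSq s)]
      · rw [hk0, ht2]; ring
      · rw [ht2]; nlinarith [hn2]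
    · push_neg at hc
      by_cases hpz : p = 0
      · have hnpz : normSq p = 0 := by rw [hpz]; simp
        have hsq : Real.sqrt (normSq s) ≤ s.re := by linarith
        have hs0nn : 0 ≤ s.re := le_trans (Real.sqrt_nonneg _) hsq
        have hns_le : normSq s ≤ s.re ^ 2 := by
          nlinarith [Real.sq_sqrt hns0, Real.sqrt_nonneg (normSq s)]
        have him : s.imI = 0 ∧ s.imJ = 0 ∧ s.imK = 0 := by
          rw [Quaternion.normSq_def'] at hns_le
          refine ⟨?_, ?_, ?_⟩ <;> nlinarith [sq_nonneg s.imI, sq_nonneg s.imJ, sq_nonneg s.imK]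
        set z : H := ⟨0, Real.sqrt s.re, 0, 0⟩ with hz
        have z1 : z.re = 0 := rfl
        have z2 : z.imI = Real.sqrt s.re := rfl
        have z3 : z.imJ = 0 := rfl
        have z4 : z.imK = 0 := rfl
        refine ⟨z, ?_⟩
        rw [hpz]
        ext <;> simp [Quaternion.re_mul, Quaternion.imI_mul, Quaternion.imJ_mul,
          Quaternion.imK_mul, him.1, him.2.1, him.2.2, z1, z2, z3, z4] <;>
          nlinarith [Real.sq_sqrt hs0nn]
      · have hnppos : 0 < normSq p := by
          rcases lt_or_eq_of_le hnp0 with h | h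
          · exact h
          · exact absurd (Quaternion.normSq_eq_zero.mp h.symm) hpz
        have hDnn : 0 ≤ (2 * s.re + normSq p) ^ 2 - 4 * normSq s := by
          nlinarith [Real.sq_sqrt hns0, Real.sqrt_nonneg (normSq s)]
        have hsqD : (Real.sqrt ((2 * s.re + normSq p) ^ 2 - 4 * normSq s)) ^ 2
            = (2 * s.re + normSq p) ^ 2 - 4 * normSq s := Real.sq_sqrt hDnn
        refine key p s 0
          ((2 * s.re + normSq p + Real.sqrt ((2 * s.re + normSq p) ^ 2 - 4 * normSq s)) / 2)
          hp (by simpa using hnppos.ne') ?_ ?_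
        · rw [hk0]; ring
        · linear_combination (1/4 : ℝ) * hsqD
  · -- k ≠ 0 : IVT
    have hcont : Continuous (fun t : ℝ =>
        t ^ 2 * (s.re + (t ^ 2 + normSq p) / 2) ^ 2 - (p * s).re ^ 2 - t ^ 2 * normSq s) := by
      fun_prop
    have hR2 : (Real.sqrt (normSq s + (p * s).re ^ 2)) ^ 2 = normSq s + (p * s).re ^ 2 :=
      Real.sq_sqrt (by positivity)
    have hR0 : 0 ≤ Real.sqrt (normSq s + (p * s).re ^ 2) := Real.sqrt_nonneg _
    have hu1 : (1:ℝ) ≤ max 1 (2 * (Real.sqrt (normSq s + (p * s).re ^ 2) - s.re - normSq p / 2)) :=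
      le_max_left _ _
    have huR : 2 * (Real.sqrt (normSq s + (p * s).re ^ 2) - s.re - normSq p / 2)
        ≤ max 1 (2 * (Real.sqrt (normSq s + (p * s).re ^ 2) - s.re - normSq p / 2)) :=
      le_max_right _ _
    have hT2 : (Real.sqrt (max 1 (2 * (Real.sqrt (normSq s + (p * s).re ^ 2) - s.re - normSq p / 2)))) ^ 2
        = max 1 (2 * (Real.sqrt (normSq s + (p * s).re ^ 2) - s.re - normSq p / 2)) :=
      Real.sq_sqrt (by linarith)
    have hT0 : 0 ≤ Real.sqrt (max 1 (2 * (Real.sqrt (normSq s + (p * s).re ^ 2) - s.re - normSq p / 2))) :=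
      Real.sqrt_nonneg _
    have hk2 : 0 < (p * s).re ^ 2 := by positivity
    have hfT : (0:ℝ) ≤ (fun t : ℝ =>
        t ^ 2 * (s.re + (t ^ 2 + normSq p) / 2) ^ 2 - (p * s).re ^ 2 - t ^ 2 * normSq s)
        (Real.sqrt (max 1 (2 * (Real.sqrt (normSq s + (p * s).re ^ 2) - s.re - normSq p / 2)))) := by
      simp only [hT2]
      set u := max 1 (2 * (Real.sqrt (normSq s + (p * s).re ^ 2) - s.re - normSq p / 2))
      set R := Real.sqrt (normSq s + (p * s).re ^ 2)
      have hM : R ≤ s.re + (u + normSq p) / 2 := by linarith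
      nlinarith [sq_nonneg (s.re + (u + normSq p) / 2 - R),
        mul_le_mul_of_nonneg_left hM hR0, hu1, hR2]
    have hf0 : (fun t : ℝ =>
        t ^ 2 * (s.re + (t ^ 2 + normSq p) / 2) ^ 2 - (p * s).re ^ 2 - t ^ 2 * normSq s) 0 < 0 := by
      simp only; nlinarith
    obtain ⟨t, htmem, htval⟩ :=
      intermediate_value_Icc hT0 hcont.continuousOn ⟨hf0.le, hfT⟩
    simp only at htval
    have ht0 : t ≠ 0 := by
      rintro rfl
      simp only at hf0
      rw [htval] at hf0
      exact lt_irrefl 0 hf0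
    have hnt : (s.re + (t ^ 2 + normSq p) / 2 - (p * s).re / t) * t
        = (s.re + (t ^ 2 + normSq p) / 2) * t - (p * s).re := by
      field_simp
    refine key p s t (s.re + (t ^ 2 + normSq p) / 2 - (p * s).re / t) hp ?_ ?_ ?_
    · have : 0 < t ^ 2 := by positivity
      positivity
    · exact arithA t (normSq p) s.re ((p * s).re) _ hnt
    · exact arithB t (normSq p) s.re ((p * s).re) (normSq s) _ ht0 hnt htval


lemma solve_left (p r : H) : ∃ y : H, y * y + p * y + r = 0 := by
  obtain ⟨z, hz⟩ := solve_depressed (p - ((p.re : ℝ) : H))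
    (r + (((p.re / 2) ^ 2 : ℝ) : H) - ((p.re / 2 : ℝ) : H) * p) (by simp)
  refine ⟨z - ((p.re / 2 : ℝ) : H), ?_⟩
  rw [← hz]
  ext <;>
    simp only [Quaternion.re_mul, Quaternion.imI_mul, Quaternion.imJ_mul, Quaternion.imK_mul,
      Quaternion.re_add, Quaternion.imI_add, Quaternion.imJ_add, Quaternion.imK_add,
      Quaternion.re_sub, Quaternion.imI_sub, Quaternion.imJ_sub, Quaternion.imK_sub,
      Quaternion.re_coe, Quaternion.imI_coe, Quaternion.imJ_coe, Quaternion.imK_coe] <;>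
    ring

lemma solve_right (e q : H) : ∃ α : H, α * α + α * e - q = 0 := by
  obtain ⟨y, hy⟩ := solve_left (star e) (-star q)
  refine ⟨star y, ?_⟩
  have h := congrArg star hy
  simp only [star_add, star_mul, star_star, star_zero, star_neg] at h
  calc star y * star y + star y * e - q
      = star y * star y + star y * e + star (-star q) := by simp [sub_eq_add_neg]
    _ = star y * star y + star y * e + -q := by simp
    _ = 0 := h

/-- The non-commuting quadratic equation `α²b + α(d − a) − c = 0` always has a
quaternionic solution when `b ≠ 0`. -/
theorem quaternion_quadratic_solvable (a b c d : Quaternion ℝ) (hb : b ≠ 0) :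
    ∃ α : Quaternion ℝ, α ^ 2 * b + α * (d - a) - c = 0 := by
  obtain ⟨α, hα⟩ := solve_right ((d - a) * b⁻¹) (c * b⁻¹)
  refine ⟨α, ?_⟩
  have hbb : b⁻¹ * b = 1 := inv_mul_cancel₀ hb
  have h := congrArg (· * b) hα
  simp only [zero_mul] at h
  calc α ^ 2 * b + α * (d - a) - c
      = (α * α + α * ((d - a) * b⁻¹) - c * b⁻¹) * b := by
        rw [sq, sub_mul, add_mul, mul_assoc α ((d - a) * b⁻¹) b, mul_assoc (d - a) b⁻¹ b,
          mul_assoc c b⁻¹ b, hbb, mul_one, mul_one]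
    _ = 0 := h
end

section
/- Every quaternionic n×n matrix M is similar over ℍ to an upper triangular matrix: there exists an invertible S ∈ ℍ^{n×n} such that S⁻¹ M S is upper triangular (all entries below the diagonal are zero). -/
open Matrix Quaternion

noncomputable section QAux

/-- The ring embedding of `ℂ` into the quaternions. -/
def cq : ℂ →+* Quaternion ℝ where
  toFun z := ⟨z.re, z.im, 0, 0⟩
  map_one' := by ext <;> simp
  map_mul' z w := by
    ext <;> simp [Complex.mul_re, Complex.mul_im] <;> erw [QuaternionAlgebra.mk_mul_mk] <;> simp <;> ring
  map_zero' := by ext <;> simp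
  map_add' z w := by ext <;> simp <;> erw [QuaternionAlgebra.mk_add_mk] <;> simp

lemma cq_comm : ∀ x y : ℂ, Commute (cq x) (cq y) := fun x y => by
  simpa [Commute, SemiconjBy, ← _root_.map_mul] using congrArg cq (mul_comm x y)

/-- `ℍ` as a right `ℂ`-module. -/
instance modC : Module ℂ (Quaternion ℝ) := Module.compHom _ (cq.toOpposite cq_comm)

lemma smulC_def (z : ℂ) (v : Quaternion ℝ) : z • v = v * cq z := rfl

lemma cq_real (r : ℝ) : cq (r : ℂ) = (r : Quaternion ℝ) := by
  ext <;> rfl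

instance : IsScalarTower ℝ ℂ (Quaternion ℝ) := ⟨fun r z v => by
  rw [smulC_def, smulC_def, Complex.real_smul, _root_.map_mul, cq_real,
    Quaternion.coe_commutes, ← mul_assoc, Quaternion.mul_coe_eq_smul]⟩

end QAux

/-- Every nonempty quaternionic matrix has a right eigenvector. -/
lemma exists_right_eigenvector (n : ℕ) (M : Matrix (Fin (n+1)) (Fin (n+1)) (Quaternion ℝ)) :
    ∃ v : Fin (n+1) → Quaternion ℝ, v ≠ 0 ∧ ∃ q : Quaternion ℝ,
      M *ᵥ v = fun i => v i * q := by
  haveI : FiniteDimensional ℂ (Fin (n+1) → Quaternion ℝ) :=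
    Module.Finite.of_restrictScalars_finite ℝ ℂ _
  let f : Module.End ℂ (Fin (n+1) → Quaternion ℝ) :=
    { toFun := fun v => M *ᵥ v
      map_add' := fun u v => M.mulVec_add u v
      map_smul' := fun z v => by
        funext i
        simp only [RingHom.id_apply, Pi.smul_apply, Matrix.mulVec, dotProduct,
          smulC_def, ← mul_assoc, Finset.sum_mul] }
  obtain ⟨c, hc⟩ := Module.End.exists_eigenvalue f
  obtain ⟨v, hv⟩ := hc.exists_hasEigenvector
  refine ⟨v, hv.right, cq c, ?_⟩
  have := hv.apply_eq_smul
  funext i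
  have : (M *ᵥ v) i = (c • v) i := congrFun hv.apply_eq_smul i
  simpa [smulC_def] using this

/-- Any nonzero vector is the first column of an invertible matrix. -/
lemma exists_invertible_with_col (n : ℕ) (v : Fin (n+1) → Quaternion ℝ) (hv : v ≠ 0) :
    ∃ S S' : Matrix (Fin (n+1)) (Fin (n+1)) (Quaternion ℝ),
      S * S' = 1 ∧ S' * S = 1 ∧ ∀ i, S i 0 = v i := by
  obtain ⟨i0, h0⟩ : ∃ i, v i ≠ 0 := Function.ne_iff.mp hv
  set A : Matrix (Fin (n+1)) (Fin (n+1)) (Quaternion ℝ) :=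
    Matrix.of (fun i j => if j = i0 then v i else if i = j then 1 else 0) with hA
  set B : Matrix (Fin (n+1)) (Fin (n+1)) (Quaternion ℝ) :=
    Matrix.of (fun i j => if j = i0 then
      (if i = i0 then (v i0)⁻¹ else -(v i) * (v i0)⁻¹) else if i = j then 1 else 0) with hB
  have hAB : A * B = 1 := by
    refine Matrix.ext fun i j => ?_
    rw [Matrix.mul_apply]
    by_cases hj : j = i0
    · rw [← Finset.add_sum_erase _ _ (Finset.mem_univ i0)]
      have hterm : ∀ k ∈ Finset.univ.erase i0,
          A i k * B k j = if i = k then -(v k) * (v i0)⁻¹ else 0 := by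
        intro k hk
        have hk' : k ≠ i0 := (Finset.mem_erase.mp hk).1
        simp only [hA, hB, Matrix.of_apply, if_neg hk', if_pos hj]
        by_cases h : i = k <;> simp [h]
      rw [Finset.sum_congr rfl hterm, Finset.sum_ite_eq]
      have hij : (i = j) ↔ (i = i0) := by rw [hj]
      by_cases h : i = i0
      · simp [hA, hB, Matrix.of_apply, hj, h, hij, Matrix.one_apply, mul_inv_cancel₀ h0]
      · have hmem : i ∈ Finset.univ.erase i0 := Finset.mem_erase.mpr ⟨h, Finset.mem_univ i⟩
        simp [hA, hB, Matrix.of_apply, hj, h, hmem, Matrix.one_apply,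
          (hij.not.mpr h : ¬i = j), neg_mul]
    · have hterm : ∀ k ∈ Finset.univ, A i k * B k j = if k = j then A i j else 0 := by
        intro k _
        by_cases h : k = j
        · rw [if_pos h, h]
          simp [hB, Matrix.of_apply, hj]
        · rw [if_neg h]
          simp only [hB, Matrix.of_apply, if_neg hj, if_neg h, mul_zero]
      rw [Finset.sum_congr rfl hterm, Finset.sum_ite_eq', if_pos (Finset.mem_univ j)]
      simp only [hA, Matrix.of_apply, if_neg hj, Matrix.one_apply]
  have hBA : B * A = 1 := by
    refine Matrix.ext fun i j => ?_
    rw [Matrix.mul_apply]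
    by_cases hj : j = i0
    · rw [← Finset.add_sum_erase _ _ (Finset.mem_univ i0)]
      have hterm : ∀ k ∈ Finset.univ.erase i0,
          B i k * A k j = if i = k then v k else 0 := by
        intro k hk
        have hk' : k ≠ i0 := (Finset.mem_erase.mp hk).1
        simp only [hA, hB, Matrix.of_apply, if_neg hk', if_pos hj]
        by_cases h : i = k <;> simp [h]
      rw [Finset.sum_congr rfl hterm, Finset.sum_ite_eq]
      have hij : (i = j) ↔ (i = i0) := by rw [hj]
      by_cases h : i = i0
      · simp [hA, hB, Matrix.of_apply, hj, h, hij, Matrix.one_apply, inv_mul_cancel₀ h0]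
      · have hmem : i ∈ Finset.univ.erase i0 := Finset.mem_erase.mpr ⟨h, Finset.mem_univ i⟩
        simp [hA, hB, Matrix.of_apply, hj, h, hmem, Matrix.one_apply,
          (hij.not.mpr h : ¬i = j), mul_assoc, inv_mul_cancel₀ h0]
    · have hterm : ∀ k ∈ Finset.univ, B i k * A k j = if k = j then B i j else 0 := by
        intro k _
        by_cases h : k = j
        · rw [if_pos h, h]
          simp [hA, Matrix.of_apply, hj]
        · rw [if_neg h]
          simp only [hA, Matrix.of_apply, if_neg hj, if_neg h, mul_zero]
      rw [Finset.sum_congr rfl hterm, Finset.sum_ite_eq', if_pos (Finset.mem_univ j)]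
      simp only [hB, Matrix.of_apply, if_neg hj, Matrix.one_apply]
  refine ⟨A.submatrix id (Equiv.swap 0 i0), B.submatrix (Equiv.swap 0 i0) id, ?_, ?_, ?_⟩
  · refine Matrix.ext fun i j => ?_
    rw [Matrix.mul_apply]
    have h1 : ∀ k, A.submatrix id (Equiv.swap 0 i0) i k * B.submatrix (Equiv.swap 0 i0) id k j
        = A i (Equiv.swap 0 i0 k) * B (Equiv.swap 0 i0 k) j := fun k => rfl
    rw [Finset.sum_congr rfl fun k _ => h1 k,
      Equiv.sum_comp (Equiv.swap 0 i0) (fun k => A i k * B k j), ← Matrix.mul_apply, hAB]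
  · refine Matrix.ext fun i j => ?_
    rw [Matrix.mul_apply]
    have h1 : (∑ k, B.submatrix (Equiv.swap 0 i0) id i k * A.submatrix id (Equiv.swap 0 i0) k j)
        = (B * A) (Equiv.swap 0 i0 i) (Equiv.swap 0 i0 j) := by rw [Matrix.mul_apply]; rfl
    rw [h1, hBA, Matrix.one_apply, Matrix.one_apply]
    simp [Equiv.apply_eq_iff_eq]
  · intro i
    simp [Matrix.submatrix_apply, Equiv.swap_apply_left, hA]

/-- Pad an `n×n` matrix to an `(n+1)×(n+1)` matrix with a `1` in the top-left corner. -/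
noncomputable def padQ {n : ℕ} (T : Matrix (Fin n) (Fin n) (Quaternion ℝ)) :
    Matrix (Fin (n+1)) (Fin (n+1)) (Quaternion ℝ) :=
  Matrix.of fun i j =>
    if hi : i = 0 then (if j = 0 then 1 else 0)
    else if hj : j = 0 then 0 else T (i.pred hi) (j.pred hj)

lemma padQ_zero_zero {n : ℕ} (T : Matrix (Fin n) (Fin n) (Quaternion ℝ)) :
    padQ T 0 0 = 1 := by simp [padQ]

lemma padQ_succ_zero {n : ℕ} (T : Matrix (Fin n) (Fin n) (Quaternion ℝ)) (i : Fin n) :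
    padQ T i.succ 0 = 0 := by simp [padQ, Fin.succ_ne_zero]

lemma padQ_zero_succ {n : ℕ} (T : Matrix (Fin n) (Fin n) (Quaternion ℝ)) (j : Fin n) :
    padQ T 0 j.succ = 0 := by simp [padQ, Fin.succ_ne_zero]

lemma padQ_succ_succ {n : ℕ} (T : Matrix (Fin n) (Fin n) (Quaternion ℝ)) (i j : Fin n) :
    padQ T i.succ j.succ = T i j := by simp [padQ, Fin.succ_ne_zero]

lemma padQ_mul {n : ℕ} (T U : Matrix (Fin n) (Fin n) (Quaternion ℝ)) :
    padQ T * padQ U = padQ (T * U) := by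
  refine Matrix.ext fun i j => ?_
  rw [Matrix.mul_apply, Fin.sum_univ_succ]
  induction i using Fin.cases with
  | zero =>
    induction j using Fin.cases with
    | zero => simp [padQ_zero_zero, padQ_zero_succ]
    | succ j => simp [padQ_zero_zero, padQ_zero_succ]
  | succ i =>
    induction j using Fin.cases with
    | zero => simp [padQ_succ_zero, padQ_zero_zero, padQ_succ_succ]
    | succ j => simp [padQ_succ_zero, padQ_zero_succ, padQ_succ_succ, Matrix.mul_apply]

lemma padQ_one {n : ℕ} : padQ (1 : Matrix (Fin n) (Fin n) (Quaternion ℝ)) = 1 := by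
  refine Matrix.ext fun i j => ?_
  induction i using Fin.cases with
  | zero =>
    induction j using Fin.cases with
    | zero => simp [padQ_zero_zero, Matrix.one_apply]
    | succ j => simp [padQ_zero_succ, Matrix.one_apply, (Fin.succ_ne_zero j).symm]
  | succ i =>
    induction j using Fin.cases with
    | zero => simp [padQ_succ_zero, Matrix.one_apply, Fin.succ_ne_zero]
    | succ j => simp [padQ_succ_succ, Matrix.one_apply, Fin.succ_inj]

theorem quaternion_triangularizable_aux :
    ∀ n : ℕ, ∀ M : Matrix (Fin n) (Fin n) (Quaternion ℝ),
    ∃ S S' : Matrix (Fin n) (Fin n) (Quaternion ℝ), S * S' = 1 ∧ S' * S = 1 ∧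
      ∀ i j : Fin n, j < i → (S' * M * S) i j = 0 := by
  intro n
  induction n with
  | zero => exact fun M => ⟨1, 1, by simp, by simp, fun i => i.elim0⟩
  | succ n ih =>
    intro M
    obtain ⟨v, hv, q, hq⟩ := exists_right_eigenvector n M
    obtain ⟨S₁, S₁', h11', h1'1, hcol⟩ := exists_invertible_with_col n v hv
    set N : Matrix (Fin (n+1)) (Fin (n+1)) (Quaternion ℝ) := S₁' * M * S₁ with hN
    -- the first column of `N` is `q • e₀`
    have hNcol : ∀ i : Fin (n+1), i ≠ 0 → N i 0 = 0 := by
      intro i hi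
      have e1 : N i 0 = ((S₁' * M) *ᵥ v) i := by
        rw [hN, Matrix.mul_apply, Matrix.mulVec]
        exact Finset.sum_congr rfl fun k _ => by rw [hcol k]
      have e2 : (S₁' * M) *ᵥ v = S₁' *ᵥ (M *ᵥ v) := (Matrix.mulVec_mulVec _ _ _).symm
      have e3 : S₁' *ᵥ (M *ᵥ v) = fun i => (S₁' *ᵥ v) i * q := by
        rw [hq]
        funext i
        simp only [Matrix.mulVec, dotProduct, ← mul_assoc, Finset.sum_mul]
      have e4 : S₁' *ᵥ v = fun i => (1 : Matrix (Fin (n+1)) (Fin (n+1)) (Quaternion ℝ)) i 0 := by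
        funext i
        rw [← h1'1, Matrix.mul_apply, Matrix.mulVec]
        exact Finset.sum_congr rfl fun k _ => by rw [hcol k]
      rw [e1, e2, e3, e4]
      simp [Matrix.one_apply, hi]
    obtain ⟨T, T', hTT', hT'T, hT⟩ := ih (N.submatrix Fin.succ Fin.succ)
    refine ⟨S₁ * padQ T, padQ T' * S₁', ?_, ?_, ?_⟩
    · rw [mul_assoc, ← mul_assoc (padQ T), padQ_mul, hTT', padQ_one, one_mul, h11']
    · rw [mul_assoc, ← mul_assoc S₁']
      rw [h1'1, one_mul, padQ_mul, hT'T, padQ_one]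
    · intro i j hij
      have hkey : padQ T' * S₁' * M * (S₁ * padQ T) = padQ T' * N * padQ T := by
        rw [hN]; simp only [mul_assoc]
      rw [hkey]
      have hA : ∀ i' : Fin n, (padQ T' * N) i'.succ 0 = 0 := by
        intro i'
        rw [Matrix.mul_apply, Fin.sum_univ_succ, padQ_succ_zero, zero_mul, zero_add]
        refine Finset.sum_eq_zero fun k _ => ?_
        rw [hNcol k.succ (Fin.succ_ne_zero k), mul_zero]
      have hB : ∀ i' l' : Fin n, (padQ T' * N) i'.succ l'.succ
          = (T' * N.submatrix Fin.succ Fin.succ) i' l' := by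
        intro i' l'
        rw [Matrix.mul_apply, Fin.sum_univ_succ, padQ_succ_zero, zero_mul, zero_add,
          Matrix.mul_apply]
        exact Finset.sum_congr rfl fun k _ => by rw [padQ_succ_succ]; rfl
      induction i using Fin.cases with
      | zero => exact absurd hij (Fin.not_lt_zero j)
      | succ i =>
        rw [Matrix.mul_apply, Fin.sum_univ_succ, hA, zero_mul, zero_add]
        induction j using Fin.cases with
        | zero =>
          refine Finset.sum_eq_zero fun l _ => ?_
          rw [padQ_succ_zero, mul_zero]
        | succ j =>
          have : (∑ l : Fin n, (padQ T' * N) i.succ l.succ * padQ T l.succ j.succ)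
              = (T' * N.submatrix Fin.succ Fin.succ * T) i j := by
            rw [Matrix.mul_apply]
            exact Finset.sum_congr rfl fun l _ => by rw [hB, padQ_succ_succ]
          rw [this]
          exact hT i j (by simpa using hij)

/-- Every quaternionic `n×n` matrix is similar over `ℍ` to an upper triangular matrix. -/
theorem quaternion_matrix_triangularizable (n : ℕ)
    (M : Matrix (Fin n) (Fin n) (Quaternion ℝ)) :
    ∃ S S' : Matrix (Fin n) (Fin n) (Quaternion ℝ), S * S' = 1 ∧ S' * S = 1 ∧
      ∀ i j : Fin n, j < i → (S' * M * S) i j = 0 := by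
  exact quaternion_triangularizable_aux n M
end

section
/- For all nonzero quaternions a, b, c, d, the following four nonnegative real numbers are equal: |a|·|d − c a⁻¹ b| = |b|·|c − d b⁻¹ a| = |c|·|b − a c⁻¹ d| = |d|·|a − b d⁻¹ c|. -/
private lemma quat_key (x y : Quaternion ℝ) (hx : x ≠ 0) (hy : y ≠ 0) :
    x⁻¹ - y⁻¹ = x⁻¹ * (y - x) * y⁻¹ := by
  rw [mul_sub, sub_mul, mul_assoc, mul_inv_cancel₀ hy, inv_mul_cancel₀ hx, one_mul, mul_one]

private lemma quat_factor (c d a b : Quaternion ℝ) (hc : c ≠ 0) :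
    d - c * a⁻¹ * b = c * (c⁻¹ * d - a⁻¹ * b) := by
  rw [mul_sub, ← mul_assoc, mul_inv_cancel₀ hc, one_mul, mul_assoc]

/-- For nonzero quaternions `a, b, c, d` the four Schur-complement expressions for the
`2×2` Study determinant coincide. -/
theorem quaternion_two_by_two_sdet_expressions (a b c d : Quaternion ℝ)
    (ha : a ≠ 0) (hb : b ≠ 0) (hc : c ≠ 0) (hd : d ≠ 0) :
    ‖a‖ * ‖d - c * a⁻¹ * b‖ = ‖b‖ * ‖c - d * b⁻¹ * a‖ ∧
    ‖b‖ * ‖c - d * b⁻¹ * a‖ = ‖c‖ * ‖b - a * c⁻¹ * d‖ ∧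
    ‖c‖ * ‖b - a * c⁻¹ * d‖ = ‖d‖ * ‖a - b * d⁻¹ * c‖ := by
  have hab : a⁻¹ * b ≠ 0 := mul_ne_zero (inv_ne_zero ha) hb
  have hcd : c⁻¹ * d ≠ 0 := mul_ne_zero (inv_ne_zero hc) hd
  have key : (a⁻¹ * b)⁻¹ - (c⁻¹ * d)⁻¹ = (a⁻¹ * b)⁻¹ * (c⁻¹ * d - a⁻¹ * b) * (c⁻¹ * d)⁻¹ :=
    quat_key _ _ hab hcd
  have h1 : ‖a‖ * ‖d - c * a⁻¹ * b‖ = ‖a‖ * ‖c‖ * ‖c⁻¹ * d - a⁻¹ * b‖ := by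
    rw [quat_factor c d a b hc, norm_mul]; ring
  have h3 : ‖c‖ * ‖b - a * c⁻¹ * d‖ = ‖a‖ * ‖c‖ * ‖c⁻¹ * d - a⁻¹ * b‖ := by
    rw [quat_factor a b c d ha, norm_mul, ← norm_neg (a⁻¹ * b - c⁻¹ * d), neg_sub]; ring
  have h2 : ‖b‖ * ‖c - d * b⁻¹ * a‖ = ‖b‖ * ‖d‖ * ‖d⁻¹ * c - b⁻¹ * a‖ := by
    rw [quat_factor d c b a hd, norm_mul]; ring
  have h4 : ‖d‖ * ‖a - b * d⁻¹ * c‖ = ‖b‖ * ‖d‖ * ‖d⁻¹ * c - b⁻¹ * a‖ := by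
    rw [quat_factor b a d c hb, norm_mul, ← norm_neg (b⁻¹ * a - d⁻¹ * c), neg_sub]; ring
  have hrel : ‖b‖ * ‖d‖ * ‖d⁻¹ * c - b⁻¹ * a‖ = ‖a‖ * ‖c‖ * ‖c⁻¹ * d - a⁻¹ * b‖ := by
    have e : d⁻¹ * c - b⁻¹ * a = -((a⁻¹ * b)⁻¹ - (c⁻¹ * d)⁻¹) := by
      rw [mul_inv_rev, mul_inv_rev, inv_inv, inv_inv, neg_sub]
    rw [e, norm_neg, key, norm_mul, norm_mul, mul_inv_rev, mul_inv_rev, inv_inv, inv_inv,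
      norm_mul, norm_mul, norm_inv, norm_inv]
    have hna : ‖a‖ ≠ 0 := norm_ne_zero_iff.mpr ha
    have hnb : ‖b‖ ≠ 0 := norm_ne_zero_iff.mpr hb
    have hnc : ‖c‖ ≠ 0 := norm_ne_zero_iff.mpr hc
    have hnd : ‖d‖ ≠ 0 := norm_ne_zero_iff.mpr hd
    field_simp
  exact ⟨by rw [h1, h2, hrel], by rw [h2, h3, hrel], by rw [h3, h4, hrel]⟩
end
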